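/- arXiv:2312.00896 — 13 statements merged into one kernel-verified Lean document; each statement's English description precedes it below -/
import Mathlib

section
/- Suppose the nonnegative sequences S(t) and F(t) have long-term averages s and f respectively, with s < f. Then the buffer occupancy satisfies lim_{T→∞} Q(T)/T = 0. -/
open Filter

/-- If the nonnegative service and consumption sequences `S`, `F` have long-term
averages `s < f`, then the buffer occupancy `Q` satisfies `Q T / T → 0`. -/
theorem buffer_sublinear
    (S F Q : ℕ → ℝ) (s f : ℝ)
    (hS0 : ∀ t, 0 ≤ S t) (hF0 : ∀ t, 0 ≤ F t)
    (hQ1 : 0 ≤ Q 1)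
    (hQrec : ∀ t, 1 ≤ t → Q (t + 1) = max (Q t + S t - F t) 0)
    (hs : Tendsto (fun T : ℕ => (∑ t ∈ Finset.Icc 1 T, S t) / T) atTop (nhds s))
    (hf : Tendsto (fun T : ℕ => (∑ t ∈ Finset.Icc 1 T, F t) / T) atTop (nhds f))
    (hsf : s < f) :
    Tendsto (fun T : ℕ => Q T / T) atTop (nhds 0) := by
  set A : ℕ → ℝ := fun T => ∑ t ∈ Finset.Icc 1 T, (S t - F t) with hAdef
  have hA : Tendsto (fun T : ℕ => A T / T) atTop (nhds (s - f)) := by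
    refine (hs.sub hf).congr fun T => ?_
    simp only [hAdef]
    rw [Finset.sum_sub_distrib, sub_div]
  have hQpos : ∀ t, 1 ≤ t → 0 ≤ Q t := by
    intro t ht
    rcases Nat.exists_eq_add_of_le ht with ⟨k, rfl⟩
    cases k with
    | zero => simpa using hQ1
    | succ n =>
      rw [show 1 + (n + 1) = (1 + n) + 1 by ring, hQrec (1 + n) (by omega)]
      exact le_max_right _ _
  have hAstep : ∀ T : ℕ, A (T + 1) = A T + (S (T + 1) - F (T + 1)) := by
    intro T
    simp only [hAdef]
    rw [Finset.sum_Icc_succ_top (by omega : 1 ≤ T + 1)]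
  have key : ∀ T : ℕ, ∃ k, 1 ≤ k ∧ k ≤ T + 1 ∧
      Q (T + 1) ≤ (if k = 1 then Q 1 else 0) + (A T - A (k - 1)) := by
    intro T
    induction T with
    | zero => exact ⟨1, le_refl _, by omega, by simp⟩
    | succ T ih =>
      rcases ih with ⟨k, hk1, hk2, hk⟩
      rw [hQrec (T + 1) (by omega)]
      rcases le_or_gt (Q (T + 1) + S (T + 1) - F (T + 1)) 0 with h | h
      · refine ⟨T + 2, by omega, by omega, ?_⟩
        rw [max_eq_right h]
        simp
      · refine ⟨k, hk1, by omega, ?_⟩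
        rw [max_eq_left h.le, hAstep]
        linarith
  have main : ∀ ε : ℝ, 0 < ε → ∀ᶠ T : ℕ in atTop, Q T / T < ε := by
    intro ε hε
    have hδ : 0 < f - s := by linarith
    set ε' := min (ε / 4) ((f - s) / 2) with hε'def
    have hε' : 0 < ε' := lt_min (by linarith) (by linarith)
    have h1 : s - f + ε' ≤ 0 := by
      have := min_le_right (ε / 4) ((f - s) / 2)
      rw [hε'def]; linarith
    have h2 : 2 * ε' ≤ ε / 2 := by
      have := min_le_left (ε / 4) ((f - s) / 2)
      rw [hε'def]; linarith
    obtain ⟨N0, hN0⟩ := (Metric.tendsto_atTop.1 hA) ε' hε'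
    set N := N0 + 1 with hNdef
    have hbound : ∀ n : ℕ, N ≤ n →
        (s - f - ε') * n ≤ A n ∧ A n ≤ (s - f + ε') * n := by
      intro n hn
      have hn0 : (0 : ℝ) < n := by
        have : (1 : ℕ) ≤ n := by omega
        exact_mod_cast Nat.lt_of_lt_of_le Nat.zero_lt_one this
      have hd := hN0 n (by omega)
      rw [Real.dist_eq, abs_lt] at hd
      constructor
      · have hgt : s - f - ε' < A n / n := by linarith [hd.1]
        exact le_of_lt ((lt_div_iff₀ hn0).1 hgt)
      · have hlt : A n / n < s - f + ε' := by linarith [hd.2]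
        exact le_of_lt ((div_lt_iff₀ hn0).1 hlt)
    set M := ∑ n ∈ Finset.range N, |A n| with hMdef
    have hM0 : (0 : ℝ) ≤ M :=
      Finset.sum_nonneg fun _ _ => abs_nonneg _
    have hMb : ∀ n, n < N → |A n| ≤ M := fun n hn =>
      Finset.single_le_sum (f := fun n => |A n|) (fun _ _ => abs_nonneg _)
        (Finset.mem_range.2 hn)
    have hQbound : ∀ T : ℕ, N ≤ T → Q (T + 1) ≤ (Q 1 + M) + ε / 2 * T := by
      intro T hT
      obtain ⟨k, hk1, hk2, hk⟩ := key T
      have hc : (if k = 1 then Q 1 else 0) ≤ Q 1 := by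
        split
        · exact le_refl _
        · exact hQ1
      have hTnn : (0 : ℝ) ≤ (T : ℝ) := Nat.cast_nonneg T
      have hεT : 0 ≤ ε / 2 * T := by positivity
      rcases le_or_gt N (k - 1) with hkN | hkN
      · have hT' := (hbound T hT).2
        have hk' := (hbound (k - 1) hkN).1
        have hcast : ((k - 1 : ℕ) : ℝ) ≤ (T : ℝ) := by
          exact_mod_cast (by omega : k - 1 ≤ T)
        have hknn : (0 : ℝ) ≤ ((k - 1 : ℕ) : ℝ) := Nat.cast_nonneg _
        have hAle : A T - A (k - 1) ≤ ε / 2 * T := by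
          nlinarith [hT', hk', hcast, hknn, h1, h2, hε'.le, hsf]
        linarith
      · have hT' := (hbound T hT).2
        have hAT : A T ≤ 0 := le_trans hT' (mul_nonpos_of_nonpos_of_nonneg h1 hTnn)
        have hAk : -M ≤ A (k - 1) := (abs_le.1 (hMb (k - 1) hkN)).1
        linarith
    filter_upwards [eventually_ge_atTop (N + 1),
      eventually_gt_atTop ⌈2 * (Q 1 + M) / ε⌉₊] with T hT1 hT2
    obtain ⟨T', rfl⟩ : ∃ T', T = T' + 1 := ⟨T - 1, by omega⟩
    have hb := hQbound T' (by omega)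
    have hTpos : (0 : ℝ) < ((T' + 1 : ℕ) : ℝ) := by positivity
    rw [div_lt_iff₀ hTpos]
    have hceil : 2 * (Q 1 + M) / ε < ((T' + 1 : ℕ) : ℝ) := by
      calc 2 * (Q 1 + M) / ε ≤ (⌈2 * (Q 1 + M) / ε⌉₊ : ℝ) := Nat.le_ceil _
        _ < ((T' + 1 : ℕ) : ℝ) := by exact_mod_cast hT2
    have h2QM : 2 * (Q 1 + M) < ε * ((T' + 1 : ℕ) : ℝ) := by
      rw [div_lt_iff₀ hε] at hceil
      linarith
    have hcast : ((T' + 1 : ℕ) : ℝ) = (T' : ℝ) + 1 := by push_cast; ring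
    have hQ1M : 0 ≤ Q 1 + M := add_nonneg hQ1 hM0
    rw [hcast] at h2QM ⊢
    nlinarith [(Nat.cast_nonneg T' : (0:ℝ) ≤ (T':ℝ)), hε.le]
  refine tendsto_order.2 ⟨?_, ?_⟩
  · intro b hb
    filter_upwards [eventually_ge_atTop 1] with T hT
    have : (0 : ℝ) ≤ Q T / T := div_nonneg (hQpos T hT) (Nat.cast_nonneg T)
    linarith
  · intro b hb
    exact main b hb
end

section
/- Suppose the nonnegative sequences S(t) and F(t) have long-term averages s and f respectively, with s < f. Then the set of times {t : Q(t) = 0} is infinite, i.e., the buffer is empty infinitely often. -/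
open Filter

/-- If the nonnegative service and consumption sequences `S`, `F` have long-term
averages `s < f`, then the buffer is empty infinitely often. -/
theorem buffer_empty_infinitely_often
    (S F Q : ℕ → ℝ) (s f : ℝ)
    (hS0 : ∀ t, 0 ≤ S t) (hF0 : ∀ t, 0 ≤ F t)
    (hQ1 : 0 ≤ Q 1)
    (hQrec : ∀ t, 1 ≤ t → Q (t + 1) = max (Q t + S t - F t) 0)
    (hs : Tendsto (fun T : ℕ => (∑ t ∈ Finset.Icc 1 T, S t) / T) atTop (nhds s))
    (hf : Tendsto (fun T : ℕ => (∑ t ∈ Finset.Icc 1 T, F t) / T) atTop (nhds f))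
    (hsf : s < f) :
    {t : ℕ | 1 ≤ t ∧ Q t = 0}.Infinite := by
  -- Q is nonnegative at all times t ≥ 1
  have hQnn : ∀ t, 1 ≤ t → 0 ≤ Q t := by
    intro t ht
    rcases Nat.exists_eq_add_of_le ht with ⟨k, rfl⟩
    cases k with
    | zero => simpa using hQ1
    | succ n =>
      have h : 1 + (n + 1) = (1 + n) + 1 := by ring
      rw [h, hQrec (1 + n) (by omega)]
      exact le_max_right _ _
  set g : ℕ → ℝ := fun T => ∑ t ∈ Finset.Icc 1 T, (S t - F t) with hg
  have hgdiv : Tendsto (fun T : ℕ => g T / T) atTop (nhds (s - f)) := by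
    refine (hs.sub hf).congr ?_
    intro T
    simp [hg, Finset.sum_sub_distrib, sub_div]
  have hgbot : Tendsto g atTop atBot := by
    have hmul : Tendsto (fun T : ℕ => (g T / T) * T) atTop atBot :=
      Tendsto.neg_mul_atTop (by linarith) hgdiv tendsto_natCast_atTop_atTop
    refine hmul.congr' ?_
    filter_upwards [eventually_ge_atTop 1] with T hT
    have hT0 : (T : ℝ) ≠ 0 := by
      exact_mod_cast (by omega : T ≠ 0)
    field_simp
  by_contra hfin
  rw [Set.not_infinite] at hfin
  obtain ⟨N, hN⟩ := hfin.bddAbove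
  set T0 := N + 1 with hT0def
  have hne : ∀ t, T0 ≤ t → Q t ≠ 0 := by
    intro t ht h0
    have : t ≤ N := hN ⟨by omega, h0⟩
    omega
  have hstep : ∀ t, T0 ≤ t → Q (t + 1) = Q t + S t - F t := by
    intro t ht
    have h := hQrec t (by omega)
    have hne' := hne (t + 1) (by omega)
    rcases max_cases (Q t + S t - F t) 0 with ⟨h1, _⟩ | ⟨h1, _⟩
    · rw [h, h1]
    · exact absurd (h.trans h1) hne'
  have key : ∀ k, Q (T0 + k) = Q T0 + ∑ t ∈ Finset.Ico T0 (T0 + k), (S t - F t) := by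
    intro k
    induction k with
    | zero => simp
    | succ n ih =>
      have h : T0 + (n + 1) = (T0 + n) + 1 := by omega
      rw [h, hstep (T0 + n) (by omega), ih, Finset.sum_Ico_succ_top (by omega)]
      ring
  have hsplit : ∀ k : ℕ, g (T0 + k) = g (T0 - 1) + ∑ t ∈ Finset.Ico T0 (T0 + k + 1), (S t - F t) := by
    intro k
    have h1 : Finset.Icc 1 (T0 + k) = Finset.Ico 1 (T0 + k + 1) := by
      rw [Finset.Ico_add_one_right_eq_Icc]
    have h2 : Finset.Icc 1 (T0 - 1) = Finset.Ico 1 T0 := by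
      rw [← Finset.Ico_add_one_right_eq_Icc]
      congr 1
    simp only [hg, h1, h2]
    rw [← Finset.sum_Ico_consecutive (fun t => S t - F t) (by omega : 1 ≤ T0) (by omega : T0 ≤ T0 + k + 1)]
  have hbound : ∀ᶠ T in atTop, g (T0 - 1) - Q T0 ≤ g T := by
    filter_upwards [eventually_ge_atTop T0] with T hT
    obtain ⟨k, rfl⟩ := Nat.exists_eq_add_of_le hT
    have h1 : Q (T0 + (k + 1)) = Q T0 + ∑ t ∈ Finset.Ico T0 (T0 + k + 1), (S t - F t) := by
      have := key (k + 1)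
      rwa [show T0 + (k + 1) = T0 + k + 1 from by omega] at this
    have h2 : 0 ≤ Q (T0 + (k + 1)) := hQnn _ (by omega)
    have := hsplit k
    linarith
  have hlt : ∀ᶠ T in atTop, g T < g (T0 - 1) - Q T0 :=
    hgbot.eventually_lt_atBot _
  obtain ⟨T, h1, h2⟩ := (hbound.and hlt).exists
  linarith
end

section
/- (Claim 1) Suppose the nonnegative sequences S(t) and F(t) have long-term averages s and f respectively. Then the long-term average shortfall exists and equals κ̄ = lim_{T→∞} (1/T) Σ_{t=1}^T κ(t) = max(f − s, 0). -/
open Filter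

/-- Auxiliary: if `a n / n → L` and `a 0 ≥ 0`, then the running maximum of `a`
divided by `T` tends to `max L 0`. -/
lemma sup_div_tendsto_aux (a : ℕ → ℝ) (L : ℝ) (ha0 : 0 ≤ a 0)
    (hL : Tendsto (fun n : ℕ => a n / n) atTop (nhds L)) :
    Tendsto (fun T : ℕ => ((Finset.range (T + 1)).sup' ⟨0, by simp⟩ a) / T)
      atTop (nhds (max L 0)) := by
  have hK0 : 0 ≤ max L 0 := le_max_right _ _
  rw [Metric.tendsto_atTop] at hL ⊢
  intro ε hε
  obtain ⟨N₁, hN₁⟩ := hL (ε / 2) (by positivity)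
  set N : ℕ := max N₁ 1 with hNdef
  have hNpos : 0 < N := lt_of_lt_of_le one_pos (le_max_right _ _)
  set C : ℝ := (Finset.range N).sup' ⟨0, Finset.mem_range.2 hNpos⟩ a with hCdef
  obtain ⟨N₂, hN₂⟩ := exists_nat_ge (C / (max L 0 + ε / 2))
  refine ⟨max N₂ N, fun T hT => ?_⟩
  have hTN : N ≤ T := le_trans (le_max_right _ _) hT
  have hTN2 : N₂ ≤ T := le_trans (le_max_left _ _) hT
  have hT1 : 1 ≤ T := le_trans (le_max_right _ _) hTN
  have hTpos : (0 : ℝ) < T := by exact_mod_cast hT1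
  have hCle : C ≤ (max L 0 + ε / 2) * T := by
    rw [div_le_iff₀ (by positivity)] at hN₂
    have h2 : (N₂ : ℝ) ≤ T := by exact_mod_cast hTN2
    nlinarith
  have hub : ((Finset.range (T + 1)).sup' ⟨0, by simp⟩ a) ≤ (max L 0 + ε / 2) * T := by
    apply Finset.sup'_le
    intro j hj
    rcases lt_or_ge j N with hjN | hjN
    · exact le_trans (Finset.le_sup' a (Finset.mem_range.2 hjN)) hCle
    · have hj1 : 1 ≤ j := le_trans (le_max_right _ _) hjN
      have hjpos : (0 : ℝ) < j := by exact_mod_cast hj1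
      have hd := hN₁ j (le_trans (le_max_left _ _) hjN)
      rw [Real.dist_eq, abs_lt] at hd
      have h1 : a j ≤ (L + ε / 2) * j := by
        have := hd.2
        rw [div_sub' (ne_of_gt hjpos), div_lt_iff₀ hjpos] at this
        nlinarith
      have hjT : (j : ℝ) ≤ T := by
        exact_mod_cast Nat.lt_succ_iff.mp (Finset.mem_range.mp hj)
      have h2 : (L + ε / 2) * j ≤ (max L 0 + ε / 2) * T := by
        have hLK : L ≤ max L 0 := le_max_left _ _
        nlinarith
      linarith
  have hge0 : 0 ≤ (Finset.range (T + 1)).sup' ⟨0, by simp⟩ a :=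
    le_trans ha0 (Finset.le_sup' a (Finset.mem_range.2 (by omega)))
  have hgeT : a T ≤ (Finset.range (T + 1)).sup' ⟨0, by simp⟩ a :=
    Finset.le_sup' a (Finset.mem_range.2 (by omega))
  have hdT := hN₁ T (le_trans (le_max_left _ _) hTN)
  rw [Real.dist_eq, abs_lt] at hdT
  have hlow : L - ε / 2 < a T / T := by linarith [hdT.1]
  have hupp : ((Finset.range (T + 1)).sup' ⟨0, by simp⟩ a) / T ≤ max L 0 + ε / 2 := by
    rw [div_le_iff₀ hTpos]; linarith
  have hlow2 : max L 0 - ε / 2 < ((Finset.range (T + 1)).sup' ⟨0, by simp⟩ a) / T := by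
    rcases le_or_gt L 0 with h | h
    · rw [max_eq_right h]
      have : 0 ≤ ((Finset.range (T + 1)).sup' ⟨0, by simp⟩ a) / T := by positivity
      linarith
    · rw [max_eq_left h.le]
      have : a T / T ≤ ((Finset.range (T + 1)).sup' ⟨0, by simp⟩ a) / T := by
        gcongr
      linarith
  rw [Real.dist_eq, abs_lt]
  constructor <;> linarith

/-- Claim 1: if the nonnegative sequences `S`, `F` have long-term averages `s`, `f`,
then the long-term average shortfall exists and equals `max (f − s) 0`. -/
theorem average_shortfall_eq
    (S F Q κ : ℕ → ℝ) (s f : ℝ)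
    (hS0 : ∀ t, 0 ≤ S t) (hF0 : ∀ t, 0 ≤ F t)
    (hQ1 : 0 ≤ Q 1)
    (hQrec : ∀ t, 1 ≤ t → Q (t + 1) = max (Q t + S t - F t) 0)
    (hκ : ∀ t, 1 ≤ t → κ t = max (F t - (Q t + S t)) 0)
    (hs : Tendsto (fun T : ℕ => (∑ t ∈ Finset.Icc 1 T, S t) / T) atTop (nhds s))
    (hf : Tendsto (fun T : ℕ => (∑ t ∈ Finset.Icc 1 T, F t) / T) atTop (nhds f)) :
    Tendsto (fun T : ℕ => (∑ t ∈ Finset.Icc 1 T, κ t) / T) atTop (nhds (max (f - s) 0)) := by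
  set D : ℕ → ℝ := fun n => ∑ t ∈ Finset.Icc 1 n, (S t - F t) with hDdef
  set a : ℕ → ℝ := fun j => if j = 0 then Q 1 else -(D j) with hadef
  set M : ℕ → ℝ := fun T => (Finset.range (T + 1)).sup' ⟨0, by simp⟩ a with hMdef
  have hD0 : D 0 = 0 := by simp [hDdef]
  have hDsucc : ∀ T : ℕ, D (T + 1) = D T + (S (T + 1) - F (T + 1)) := fun T =>
    Finset.sum_Icc_succ_top (by omega) _
  -- κ in terms of Q
  have hκ' : ∀ t, 1 ≤ t → κ t = Q (t + 1) - Q t - S t + F t := by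
    intro t ht
    rcases le_total (Q t + S t - F t) 0 with h | h
    · rw [hκ t ht, hQrec t ht, max_eq_right h, max_eq_left (by linarith)]; ring
    · rw [hκ t ht, hQrec t ht, max_eq_left h, max_eq_right (by linarith)]; ring
  -- Lindley formula
  have hkey : ∀ T : ℕ, Q (T + 1) = D T + M T := by
    intro T
    induction T with
    | zero => simp [hMdef, hadef, hD0, Finset.range_one]
    | succ T ih =>
      have h1 : Q (T + 1 + 1) = max (Q (T + 1) + S (T + 1) - F (T + 1)) 0 :=
        hQrec (T + 1) (by omega)
      have hM : M (T + 1) = max (M T) (-(D (T + 1))) := by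
        have e1 : M (T + 1) =
            (insert (T + 1) (Finset.range (T + 1))).sup'
              (Finset.range_add_one (n := T + 1) ▸ (⟨0, by simp⟩ : (Finset.range (T + 1 + 1)).Nonempty)) a :=
          Finset.sup'_congr _ Finset.range_add_one (fun x _ => rfl)
        have e2 := Finset.sup'_insert
          (H := (⟨0, by simp⟩ : (Finset.range (T + 1)).Nonempty)) (b := T + 1) (f := a)
        have e3 : M (T + 1) = a (T + 1) ⊔ M T := e1.trans e2
        have e4 : a (T + 1) = -(D (T + 1)) := by simp [hadef]
        rw [e3, e4, max_comm]
      have hDs := hDsucc T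
      rw [h1, ih, hM]
      rcases le_total (M T) (-(D (T + 1))) with h | h
      · rw [max_eq_right (show D T + M T + S (T + 1) - F (T + 1) ≤ 0 by linarith),
          max_eq_right h]
        linarith
      · rw [max_eq_left (show (0:ℝ) ≤ D T + M T + S (T + 1) - F (T + 1) by linarith),
          max_eq_left h]
        linarith
  -- sum of κ
  have hsum : ∀ T : ℕ, (∑ t ∈ Finset.Icc 1 T, κ t) = M T - Q 1 := by
    intro T
    have h : (∑ t ∈ Finset.Icc 1 T, κ t) = Q (T + 1) - Q 1 - D T := by
      induction T with
      | zero => simp [hD0]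
      | succ T ih =>
        rw [Finset.sum_Icc_succ_top (by omega : (1:ℕ) ≤ T + 1), ih,
          hκ' (T + 1) (by omega), hDsucc]
        ring
    rw [h, hkey T]; ring
  -- limits
  have hDlim : Tendsto (fun n : ℕ => D n / n) atTop (nhds (s - f)) := by
    have := hs.sub hf
    refine this.congr fun n => ?_
    simp [hDdef, Finset.sum_sub_distrib, sub_div]
  have halim : Tendsto (fun n : ℕ => a n / n) atTop (nhds (f - s)) := by
    have h1 : Tendsto (fun n : ℕ => -(D n / n)) atTop (nhds (-(s - f))) := hDlim.neg
    rw [neg_sub] at h1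
    refine h1.congr' ?_
    filter_upwards [eventually_ge_atTop 1] with n hn
    have : n ≠ 0 := by omega
    simp [hadef, this, neg_div]
  have hMlim : Tendsto (fun T : ℕ => M T / T) atTop (nhds (max (f - s) 0)) :=
    sup_div_tendsto_aux a (f - s) (by simp [hadef, hQ1]) halim
  have hQ1lim : Tendsto (fun T : ℕ => Q 1 / T) atTop (nhds 0) :=
    tendsto_const_div_atTop_nhds_zero_nat (Q 1)
  have hfinal := hMlim.sub hQ1lim
  rw [sub_zero] at hfinal
  refine hfinal.congr fun T => ?_
  rw [hsum T, sub_div]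
end

section
/- (Theorem 1, lower bound with known consumption rates) Let m ≥ 1 and for each i ∈ {1, …, m} let V_i : ℝ → ℝ be nondecreasing. Suppose for each i the nonnegative sequences S_i(t), F_i(t) have long-term averages s_i, f_i, with buffers Q_i and shortfalls κ_i evolving per the queue dynamics; suppose the nonnegative availability sequence c(t) has long-term average c̄ and Σ_{i=1}^m S_i(t) ≤ c(t) for all t. Then the long-term average dissatisfaction satisfies (1/m) Σ_{i=1}^m V_i(κ̄_i) ≥ inf { (1/m) Σ_{i=1}^m V_i(max(f_i − x_i, 0)) : x ∈ ℝ^m, x_i ≥ 0 for all i, Σ_{i=1}^m x_i ≤ c̄ }, where κ̄_i is the long-term average of κ_i(t) (which exists and equals max(f_i − s_i, 0)). -/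
open Filter

noncomputable def Mseq (q0 : ℝ) (b : ℕ → ℝ) : ℕ → ℝ
  | 0 => -q0
  | n+1 => min (Mseq q0 b n) (b (n+1))

lemma Mseq_tendsto (b : ℕ → ℝ) (q0 L : ℝ) (hq0 : 0 ≤ q0)
    (hb : Tendsto (fun n : ℕ => b n / n) atTop (nhds L)) :
    Tendsto (fun n : ℕ => Mseq q0 b n / n) atTop (nhds (min L 0)) := by
  have hMrec : ∀ n, Mseq q0 b (n+1) = min (Mseq q0 b n) (b (n+1)) := fun n => rfl
  have hMnonpos : ∀ n, Mseq q0 b n ≤ 0 := by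
    intro n
    induction n with
    | zero => simpa [Mseq] using hq0
    | succ n ih => rw [hMrec]; exact le_trans (min_le_left _ _) ih
  have hMleb : ∀ n : ℕ, 1 ≤ n → Mseq q0 b n ≤ b n := by
    intro n hn
    obtain ⟨k, rfl⟩ := Nat.exists_eq_add_of_le hn
    rw [add_comm, hMrec]
    exact min_le_right _ _
  rw [Metric.tendsto_atTop] at hb ⊢
  intro ε hε
  obtain ⟨N₁, hN₁⟩ := hb (ε/2) (by linarith)
  set μ : ℝ := min (L - ε/2) 0 with hμdef
  have hμ0 : μ ≤ 0 := min_le_right _ _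
  set N : ℕ := max N₁ 1 with hNdef
  -- key lower bound
  have key : ∀ n, N ≤ n → min (Mseq q0 b N) ((n : ℝ) * μ) ≤ Mseq q0 b n := by
    intro n hn
    induction n, hn using Nat.le_induction with
    | base => exact min_le_left _ _
    | succ n hn ih =>
      rw [hMrec]
      refine le_min (le_trans (min_le_min le_rfl ?_) ih) ?_
      · have : (n : ℝ) ≤ (n + 1 : ℕ) := by push_cast; linarith
        nlinarith
      · have hn1 : N₁ ≤ n + 1 := le_trans (le_max_left _ _) (le_trans hn (Nat.le_succ n))
        have habs := abs_lt.mp (hN₁ (n+1) hn1)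
        have hpos : (0 : ℝ) < (n + 1 : ℕ) := by positivity
        have h1 : μ ≤ b (n+1) / (n+1 : ℕ) := le_trans (min_le_left _ _) (by linarith [habs.1])
        have h2 : ((n+1 : ℕ) : ℝ) * μ ≤ b (n+1) := by
          rw [mul_comm]; exact (le_div_iff₀ hpos).mp h1
        exact le_trans (min_le_right _ _) h2
  -- constant over n tends to 0
  have hc0 : Tendsto (fun n : ℕ => Mseq q0 b N / n) atTop (nhds 0) :=
    tendsto_const_div_atTop_nhds_zero_nat _
  rw [Metric.tendsto_atTop] at hc0
  obtain ⟨N₂, hN₂⟩ := hc0 (ε/2) (by linarith)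
  refine ⟨max (max N N₂) 1, fun n hn => ?_⟩
  have hnN : N ≤ n := le_trans (le_max_left _ _) (le_trans (le_max_left _ _) hn)
  have hnN₂ : N₂ ≤ n := le_trans (le_max_right _ _) (le_trans (le_max_left _ _) hn)
  have hn1 : 1 ≤ n := le_trans (le_max_right _ _) hn
  have hnpos : (0 : ℝ) < (n : ℝ) := by positivity
  have hnN₁ : N₁ ≤ n := le_trans (le_max_left _ _) hnN
  have habs := abs_lt.mp (hN₁ n hnN₁)
  -- upper bound
  have hupper : Mseq q0 b n / n ≤ min L 0 + ε/2 := by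
    rcases le_total L 0 with h | h
    · rw [min_eq_left h]
      have h1 : Mseq q0 b n / n ≤ b n / n := by gcongr; exact hMleb n hn1
      linarith [habs.2]
    · rw [min_eq_right h]
      have : Mseq q0 b n / n ≤ 0 := div_nonpos_of_nonpos_of_nonneg (hMnonpos n) (le_of_lt hnpos)
      linarith
  -- lower bound
  have hlower : min L 0 - ε/2 ≤ Mseq q0 b n / n := by
    have h1 : min (Mseq q0 b N) ((n : ℝ) * μ) / n ≤ Mseq q0 b n / n := by
      gcongr; exact key n hnN
    have h2 : min (Mseq q0 b N / n) μ ≤ Mseq q0 b n / n := by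
      rw [← min_div_div_right (le_of_lt hnpos)] at h1
      have : (n : ℝ) * μ / n = μ := by field_simp
      rwa [this] at h1
    have h3 : min L 0 - ε/2 ≤ Mseq q0 b N / n := by
      have := abs_lt.mp (hN₂ n hnN₂)
      have hmin : min L 0 ≤ 0 := min_le_right _ _
      linarith [this.1]
    have h4 : min L 0 - ε/2 ≤ μ := by
      rcases le_total (L - ε/2) 0 with h | h
      · rw [hμdef, min_eq_left h]
        have : min L 0 ≤ L := min_le_left _ _
        linarith
      · rw [hμdef, min_eq_right h]
        have : min L 0 ≤ 0 := min_le_right _ _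
        linarith
    exact le_trans (le_min h3 h4) h2
  rw [Real.dist_eq, abs_lt]
  constructor <;> linarith

/-- Theorem 1 (lower bound, known consumption rates): the long-term average
dissatisfaction of any feasible allocation policy is lower bounded by the value
of the static optimization problem; moreover the long-term average shortfall of
user `i` exists and equals `max (f i − s i) 0`. -/
theorem lower_bound_known_rates
    (m : ℕ) (hm : 1 ≤ m)
    (V : Fin m → ℝ → ℝ) (hV : ∀ i, Monotone (V i))
    (S F Q κ : Fin m → ℕ → ℝ) (s f : Fin m → ℝ)
    (c : ℕ → ℝ) (cbar : ℝ)
    (hS0 : ∀ i t, 0 ≤ S i t) (hF0 : ∀ i t, 0 ≤ F i t) (hc0 : ∀ t, 0 ≤ c t)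
    (hQ1 : ∀ i, 0 ≤ Q i 1)
    (hQrec : ∀ i t, 1 ≤ t → Q i (t + 1) = max (Q i t + S i t - F i t) 0)
    (hκ : ∀ i t, 1 ≤ t → κ i t = max (F i t - (Q i t + S i t)) 0)
    (hs : ∀ i, Tendsto (fun T : ℕ => (∑ t ∈ Finset.Icc 1 T, S i t) / T) atTop (nhds (s i)))
    (hf : ∀ i, Tendsto (fun T : ℕ => (∑ t ∈ Finset.Icc 1 T, F i t) / T) atTop (nhds (f i)))
    (hc : Tendsto (fun T : ℕ => (∑ t ∈ Finset.Icc 1 T, c t) / T) atTop (nhds cbar))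
    (hcap : ∀ t, 1 ≤ t → ∑ i, S i t ≤ c t) :
    (∀ i, Tendsto (fun T : ℕ => (∑ t ∈ Finset.Icc 1 T, κ i t) / T) atTop
        (nhds (max (f i - s i) 0))) ∧
    sInf {v : ℝ | ∃ x : Fin m → ℝ, (∀ i, 0 ≤ x i) ∧ (∑ i, x i) ≤ cbar ∧
        v = (1 / (m : ℝ)) * ∑ i, V i (max (f i - x i) 0)}
      ≤ (1 / (m : ℝ)) * ∑ i, V i (max (f i - s i) 0) := by
  constructor
  · -- Part 1: average shortfall exists
    intro i
    set b : ℕ → ℝ := fun n => ∑ t ∈ Finset.Icc 1 n, (S i t - F i t) with hbdef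
    -- b n / n → s i - f i
    have hbt : Tendsto (fun n : ℕ => b n / n) atTop (nhds (s i - f i)) := by
      have := (hs i).sub (hf i)
      refine this.congr (fun n => ?_)
      rw [hbdef]
      simp only [Finset.sum_sub_distrib]
      ring
    -- the queue formula
    have hQM : ∀ n : ℕ, Q i (n + 1) = b n - Mseq (Q i 1) b n := by
      intro n
      induction n with
      | zero => simp [Mseq, hbdef]
      | succ n ih =>
        have h1 : (1 : ℕ) ≤ n + 1 := Nat.le_add_left 1 n
        rw [hQrec i (n+1) h1, ih]
        have hb1 : b (n+1) = b n + (S i (n+1) - F i (n+1)) := by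
          rw [hbdef]
          exact Finset.sum_Icc_succ_top h1 _
        have : b n - Mseq (Q i 1) b n + S i (n+1) - F i (n+1)
            = b (n+1) - Mseq (Q i 1) b n := by rw [hb1]; ring
        rw [this]
        show _ = b (n+1) - min (Mseq (Q i 1) b n) (b (n+1))
        rcases le_total (Mseq (Q i 1) b n) (b (n+1)) with h | h
        · rw [min_eq_left h, max_eq_left (by linarith)]
        · rw [min_eq_right h, max_eq_right (by linarith)]; ring
    -- Q (n+1) / n → max (s i - f i) 0
    have hQt : Tendsto (fun n : ℕ => Q i (n+1) / n) atTop (nhds (max (s i - f i) 0)) := by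
      have hMt := Mseq_tendsto b (Q i 1) (s i - f i) (hQ1 i) hbt
      have := hbt.sub hMt
      have heq : s i - f i - min (s i - f i) 0 = max (s i - f i) 0 := by
        rcases le_total (s i - f i) 0 with h | h
        · rw [min_eq_left h, max_eq_right h]; ring
        · rw [min_eq_right h, max_eq_left h]; ring
      rw [heq] at this
      refine this.congr (fun n => ?_)
      rw [hQM n]; ring
    -- shortfall identity and telescoping
    have hid : ∀ t : ℕ, 1 ≤ t → κ i t = Q i (t+1) - Q i t + F i t - S i t := by
      intro t ht
      rw [hκ i t ht, hQrec i t ht]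
      rcases le_total (Q i t + S i t) (F i t) with h | h
      · rw [max_eq_left (by linarith), max_eq_right (by linarith)]; ring
      · rw [max_eq_right (by linarith), max_eq_left (by linarith)]; ring
    have hsum : ∀ T : ℕ, ∑ t ∈ Finset.Icc 1 T, κ i t
        = Q i (T+1) - Q i 1 + ((∑ t ∈ Finset.Icc 1 T, F i t) - ∑ t ∈ Finset.Icc 1 T, S i t) := by
      intro T
      induction T with
      | zero => simp
      | succ T ih =>
        have h1 : (1 : ℕ) ≤ T + 1 := Nat.le_add_left 1 T
        rw [Finset.sum_Icc_succ_top h1, Finset.sum_Icc_succ_top h1, Finset.sum_Icc_succ_top h1,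
          ih, hid (T+1) h1]
        ring
    -- assemble the limit
    have hQ10 : Tendsto (fun n : ℕ => Q i 1 / n) atTop (nhds 0) :=
      tendsto_const_div_atTop_nhds_zero_nat _
    have hfinal := ((hQt.sub hQ10).add ((hf i).sub (hs i)))
    have heq2 : max (s i - f i) 0 - 0 + (f i - s i) = max (f i - s i) 0 := by
      rcases le_total (s i) (f i) with h | h
      · rw [max_eq_right (by linarith), max_eq_left (by linarith)]; ring
      · rw [max_eq_left (by linarith), max_eq_right (by linarith)]; ring
    rw [heq2] at hfinal
    refine hfinal.congr (fun T => ?_)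
    rw [hsum T]; ring
  · -- Part 2: sInf bound
    have hs0 : ∀ i, 0 ≤ s i := by
      intro i
      refine ge_of_tendsto' (hs i) (fun T => ?_)
      exact div_nonneg (Finset.sum_nonneg fun t _ => hS0 i t) (Nat.cast_nonneg T)
    have hssum : ∑ i, s i ≤ cbar := by
      have h1 : Tendsto (fun T : ℕ => (∑ t ∈ Finset.Icc 1 T, ∑ i, S i t) / T) atTop
          (nhds (∑ i, s i)) := by
        have h2 := tendsto_finset_sum Finset.univ (fun (i : Fin m) (_ : i ∈ Finset.univ) => hs i)
        refine h2.congr (fun T => ?_)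
        rw [← Finset.sum_div, Finset.sum_comm]
      refine le_of_tendsto_of_tendsto' h1 hc (fun T => ?_)
      gcongr with t ht
      exact hcap t (Finset.mem_Icc.mp ht).1
    apply csInf_le
    · refine ⟨(1/(m:ℝ)) * ∑ i, V i (max (f i - cbar) 0), ?_⟩
      rintro v ⟨x, hx0, hxsum, rfl⟩
      have h1m : (0:ℝ) ≤ 1 / (m:ℝ) := by positivity
      refine mul_le_mul_of_nonneg_left (Finset.sum_le_sum fun i _ => ?_) h1m
      refine hV i (max_le_max ?_ le_rfl)
      have : x i ≤ cbar :=
        le_trans (Finset.single_le_sum (fun j _ => hx0 j) (Finset.mem_univ i)) hxsum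
      linarith
    · exact ⟨s, hs0, hssum, rfl⟩
end

section
/- (Theorem 1, achievability by the simple policy) Let m ≥ 1, let V_i : ℝ → ℝ for each i ∈ {1, …, m}, let ŝ_1, …, ŝ_m ≥ 0 with Σ_{i=1}^m ŝ_i ≤ c̄, and let c(t) ≥ 0 be a sequence with long-term average c̄ > 0. For each i suppose F_i(t) ≥ 0 has long-term average f_i, and define the allocation S_i(t) = ŝ_i · c(t)/c̄, with buffers Q_i (Q_i(1) ≥ 0) and shortfalls κ_i evolving per the queue dynamics. Then: (a) Σ_{i=1}^m S_i(t) ≤ c(t) for all t; (b) each S_i has long-term average ŝ_i; and (c) the long-term average dissatisfaction equals (1/m) Σ_{i=1}^m V_i(κ̄_i) = (1/m) Σ_{i=1}^m V_i(max(f_i − ŝ_i, 0)). -/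
open Filter

private def runMax (x : ℕ → ℝ) : ℕ → ℝ
  | 0 => x 0
  | n + 1 => max (runMax x n) (x (n + 1))

private lemma le_runMax (x : ℕ → ℝ) {n T : ℕ} (h : n ≤ T) : x n ≤ runMax x T := by
  induction T with
  | zero =>
    have hn : n = 0 := Nat.le_zero.mp h
    subst hn; simp [runMax]
  | succ T ih =>
    rcases eq_or_lt_of_le h with rfl | hlt
    · exact le_max_right _ _
    · exact (ih (Nat.lt_succ_iff.mp hlt)).trans (le_max_left _ _)

private lemma runMax_le (x : ℕ → ℝ) {B : ℝ} (T : ℕ) (h : ∀ n ≤ T, x n ≤ B) :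
    runMax x T ≤ B := by
  induction T with
  | zero => simpa [runMax] using h 0 le_rfl
  | succ T ih =>
    simp only [runMax, max_le_iff]
    exact ⟨ih fun n hn => h n (hn.trans (Nat.le_succ T)), h (T + 1) le_rfl⟩

private lemma tendsto_runMax_div {x : ℕ → ℝ} {L : ℝ}
    (hx : Tendsto (fun n : ℕ => x n / n) atTop (nhds L)) :
    Tendsto (fun T : ℕ => runMax x T / T) atTop (nhds (max L 0)) := by
  rw [Metric.tendsto_atTop] at hx ⊢
  intro ε hε
  obtain ⟨N0, hN0⟩ := hx (ε / 2) (by positivity)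
  set N : ℕ := N0 + 1 with hNdef
  have hub : ∀ n : ℕ, N ≤ n → x n ≤ (L + ε / 2) * n := by
    intro n hn
    have hn0 : (0 : ℝ) < n := by
      have : 1 ≤ n := by omega
      exact_mod_cast Nat.pos_of_ne_zero (by omega)
    have h := hN0 n (by omega)
    rw [Real.dist_eq, abs_sub_lt_iff] at h
    have h1 : x n / n < L + ε / 2 := by linarith [h.1]
    exact le_of_lt ((div_lt_iff₀ hn0).mp h1)
  have hlb : ∀ n : ℕ, N ≤ n → (L - ε / 2) * n ≤ x n := by
    intro n hn
    have hn0 : (0 : ℝ) < n := by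
      exact_mod_cast Nat.pos_of_ne_zero (by omega)
    have h := hN0 n (by omega)
    rw [Real.dist_eq, abs_sub_lt_iff] at h
    have h1 : L - ε / 2 < x n / n := by linarith [h.2]
    exact le_of_lt ((lt_div_iff₀ hn0).mp h1)
  have h1 : Tendsto (fun T : ℕ => runMax x N / T) atTop (nhds 0) :=
    tendsto_const_div_atTop_nhds_zero_nat _
  have h2 : Tendsto (fun T : ℕ => x 0 / T) atTop (nhds 0) :=
    tendsto_const_div_atTop_nhds_zero_nat _
  rw [Metric.tendsto_atTop] at h1 h2
  obtain ⟨N1, hN1⟩ := h1 (ε / 2) (by positivity)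
  obtain ⟨N2, hN2⟩ := h2 (ε / 2) (by positivity)
  refine ⟨N + N1 + N2 + 1, fun T hT => ?_⟩
  have hT0 : (0 : ℝ) < T := by exact_mod_cast Nat.pos_of_ne_zero (by omega)
  rw [Real.dist_eq, abs_sub_lt_iff]
  have hmax0 : (0 : ℝ) ≤ max L 0 := le_max_right _ _
  constructor
  · -- upper bound
    have hbound : runMax x T ≤ max (runMax x N) (max (L + ε / 2) 0 * T) := by
      apply runMax_le
      intro n hn
      by_cases hcase : n ≤ N
      · exact (le_runMax x hcase).trans (le_max_left _ _)
      · refine le_trans ?_ (le_max_right _ _)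
        calc x n ≤ (L + ε / 2) * n := hub n (by omega)
          _ ≤ max (L + ε / 2) 0 * n :=
              mul_le_mul_of_nonneg_right (le_max_left _ _) (Nat.cast_nonneg n)
          _ ≤ max (L + ε / 2) 0 * T :=
              mul_le_mul_of_nonneg_left (Nat.cast_le.mpr hn) (le_max_right _ _)
    have hdiv : runMax x T / T ≤ max (runMax x N) (max (L + ε / 2) 0 * T) / T := by
      gcongr
    rw [← max_div_div_right hT0.le, mul_div_cancel_right₀ _ hT0.ne'] at hdiv
    have hA : runMax x N / T < ε / 2 := by
      have := hN1 T (by omega)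
      rw [Real.dist_eq, sub_zero, abs_lt] at this
      exact this.2
    have : runMax x T / T < max L 0 + ε := by
      have := max_lt (show runMax x N / T < max L 0 + ε by linarith)
        (show max (L + ε / 2) 0 < max L 0 + ε by
          rcases le_total (L + ε / 2) 0 with h | h
          · rw [max_eq_right h]; linarith
          · rw [max_eq_left h]
            rcases le_total L 0 with h' | h'
            · rw [max_eq_right h']; linarith
            · rw [max_eq_left h']; linarith)
      exact lt_of_le_of_lt hdiv this
    linarith
  · -- lower bound
    have hA : L - ε / 2 ≤ runMax x T / T := by
      rw [le_div_iff₀ hT0]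
      exact le_trans (hlb T (by omega)) (le_runMax x (le_refl T))
    have hB : -(ε / 2) < runMax x T / T := by
      have h0 : x 0 ≤ runMax x T := le_runMax x (Nat.zero_le T)
      have hx0 := hN2 T (by omega)
      rw [Real.dist_eq, sub_zero, abs_lt] at hx0
      have : x 0 / T ≤ runMax x T / T := by gcongr
      linarith [hx0.1]
    rcases max_cases L 0 with ⟨hm, _⟩ | ⟨hm, _⟩ <;> rw [hm] <;> linarith

private lemma max_neg_eq (a : ℝ) : max (-a) 0 = max a 0 - a := by
  rcases le_total a 0 with h | h
  · rw [max_eq_left (by linarith), max_eq_right h]; ring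
  · rw [max_eq_right (by linarith), max_eq_left h]; ring

private lemma queue_formula (S F Q : ℕ → ℝ)
    (hQrec : ∀ t, 1 ≤ t → Q (t + 1) = max (Q t + S t - F t) 0)
    (x : ℕ → ℝ) (hx0 : x 0 = Q 1)
    (hxn : ∀ n, 1 ≤ n → x n = -(∑ t ∈ Finset.Icc 1 n, (S t - F t))) :
    ∀ T, Q (T + 1) = (∑ t ∈ Finset.Icc 1 T, (S t - F t)) + runMax x T := by
  have hmax : ∀ a b : ℝ, max (a + b) 0 = b + max a (-b) := by
    intro a b
    rcases le_total a (-b) with h | h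
    · rw [max_eq_right (show a + b ≤ 0 by linarith), max_eq_right h]; ring
    · rw [max_eq_left (show (0 : ℝ) ≤ a + b by linarith), max_eq_left h]; ring
  intro T
  induction T with
  | zero => simp [runMax, hx0]
  | succ T ih =>
    have hsum : (∑ t ∈ Finset.Icc 1 (T + 1), (S t - F t))
        = (∑ t ∈ Finset.Icc 1 T, (S t - F t)) + (S (T + 1) - F (T + 1)) :=
      Finset.sum_Icc_succ_top (by omega) _
    have hrm : runMax x (T + 1) = max (runMax x T) (x (T + 1)) := rfl
    rw [hQrec (T + 1) (by omega), ih, hrm, hxn (T + 1) (by omega), hsum, ← hmax]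
    congr 1
    ring

/-- Theorem 1 (achievability by the simple policy `S_i(t) = ŝ_i c(t)/c̄`):
the policy is feasible, has long-term average `ŝ_i` for each user, and its
long-term average dissatisfaction equals `(1/m) Σ_i V_i(max (f_i − ŝ_i) 0)`. -/
theorem simple_policy_achievability
    (m : ℕ) (hm : 1 ≤ m)
    (V : Fin m → ℝ → ℝ)
    (shat : Fin m → ℝ) (hshat0 : ∀ i, 0 ≤ shat i)
    (c : ℕ → ℝ) (cbar : ℝ) (hc0 : ∀ t, 0 ≤ c t) (hcbar : 0 < cbar)
    (hsum : ∑ i, shat i ≤ cbar)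
    (hc : Tendsto (fun T : ℕ => (∑ t ∈ Finset.Icc 1 T, c t) / T) atTop (nhds cbar))
    (F Q κ : Fin m → ℕ → ℝ) (f : Fin m → ℝ)
    (hF0 : ∀ i t, 0 ≤ F i t)
    (hf : ∀ i, Tendsto (fun T : ℕ => (∑ t ∈ Finset.Icc 1 T, F i t) / T) atTop (nhds (f i)))
    (S : Fin m → ℕ → ℝ) (hS : ∀ i t, S i t = shat i * c t / cbar)
    (hQ1 : ∀ i, 0 ≤ Q i 1)
    (hQrec : ∀ i t, 1 ≤ t → Q i (t + 1) = max (Q i t + S i t - F i t) 0)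
    (hκ : ∀ i t, 1 ≤ t → κ i t = max (F i t - (Q i t + S i t)) 0) :
    (∀ t, ∑ i, S i t ≤ c t) ∧
    (∀ i, Tendsto (fun T : ℕ => (∑ t ∈ Finset.Icc 1 T, S i t) / T) atTop (nhds (shat i))) ∧
    (∃ κbar : Fin m → ℝ,
      (∀ i, Tendsto (fun T : ℕ => (∑ t ∈ Finset.Icc 1 T, κ i t) / T) atTop (nhds (κbar i))) ∧
      (1 / (m : ℝ)) * ∑ i, V i (κbar i) =
        (1 / (m : ℝ)) * ∑ i, V i (max (f i - shat i) 0)) := by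
  have hSsum : ∀ i T, (∑ t ∈ Finset.Icc 1 T, S i t)
      = shat i / cbar * ∑ t ∈ Finset.Icc 1 T, c t := by
    intro i T
    rw [Finset.mul_sum]
    exact Finset.sum_congr rfl fun t _ => by rw [hS]; ring
  have hSavg : ∀ i, Tendsto (fun T : ℕ => (∑ t ∈ Finset.Icc 1 T, S i t) / T)
      atTop (nhds (shat i)) := by
    intro i
    have h2 : Tendsto (fun T : ℕ => shat i / cbar * ((∑ t ∈ Finset.Icc 1 T, c t) / T))
        atTop (nhds (shat i / cbar * cbar)) := hc.const_mul _
    rw [div_mul_cancel₀ _ hcbar.ne'] at h2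
    exact h2.congr fun T => by rw [hSsum i T, mul_div_assoc]
  have hD : ∀ i, Tendsto (fun T : ℕ => (∑ t ∈ Finset.Icc 1 T, (S i t - F i t)) / T)
      atTop (nhds (shat i - f i)) := by
    intro i
    have h := (hSavg i).sub (hf i)
    exact h.congr fun T => by rw [Finset.sum_sub_distrib, sub_div]
  set x : Fin m → ℕ → ℝ := fun i n =>
    if n = 0 then Q i 1 else -(∑ t ∈ Finset.Icc 1 n, (S i t - F i t)) with hxdef
  have hxdiv : ∀ i, Tendsto (fun n : ℕ => x i n / n) atTop (nhds (f i - shat i)) := by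
    intro i
    have h := (hD i).neg
    rw [neg_sub] at h
    refine h.congr' ?_
    filter_upwards [eventually_ge_atTop 1] with n hn
    simp only [hxdef, if_neg (by omega : ¬ n = 0)]
    rw [neg_div]
  have Qform : ∀ i T, Q i (T + 1)
      = (∑ t ∈ Finset.Icc 1 T, (S i t - F i t)) + runMax (x i) T := by
    intro i
    refine queue_formula (S i) (F i) (Q i) (hQrec i) (x i) ?_ ?_
    · simp [hxdef]
    · intro n hn; simp [hxdef, if_neg (by omega : ¬ n = 0)]
  have hκid : ∀ i t, 1 ≤ t → κ i t = Q i (t + 1) - Q i t - (S i t - F i t) := by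
    intro i t ht
    rw [hκ i t ht, hQrec i t ht]
    have h1 : F i t - (Q i t + S i t) = -(Q i t + S i t - F i t) := by ring
    rw [h1, max_neg_eq]
    ring
  have hκsum : ∀ i T, (∑ t ∈ Finset.Icc 1 T, κ i t)
      = Q i (T + 1) - Q i 1 - ∑ t ∈ Finset.Icc 1 T, (S i t - F i t) := by
    intro i T
    have h1 : (∑ t ∈ Finset.Icc 1 T, κ i t)
        = ∑ t ∈ Finset.Icc 1 T, (Q i (t + 1) - Q i t - (S i t - F i t)) :=
      Finset.sum_congr rfl fun t ht => hκid i t (Finset.mem_Icc.mp ht).1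
    rw [h1, Finset.sum_sub_distrib]
    congr 1
    rw [← Finset.Ico_add_one_right_eq_Icc, Finset.sum_Ico_eq_sum_range]
    try simp only [Nat.add_sub_cancel]
    have h2 := Finset.sum_range_sub (fun j => Q i (j + 1)) T
    refine Eq.trans (Finset.sum_congr rfl fun j _ => ?_) h2
    rw [Nat.add_comm 1 j]
  have hκavg : ∀ i, Tendsto (fun T : ℕ => (∑ t ∈ Finset.Icc 1 T, κ i t) / T)
      atTop (nhds (max (f i - shat i) 0)) := by
    intro i
    have h1 := (tendsto_runMax_div (hxdiv i)).sub
      (tendsto_const_div_atTop_nhds_zero_nat (Q i 1))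
    rw [sub_zero] at h1
    refine h1.congr fun T => ?_
    rw [hκsum i T, Qform i T]
    ring
  refine ⟨?_, hSavg, fun i => max (f i - shat i) 0, hκavg, rfl⟩
  intro t
  have h1 : ∑ i, S i t = (∑ i, shat i) * (c t / cbar) := by
    rw [Finset.sum_mul]
    exact Finset.sum_congr rfl fun i _ => by rw [hS]; ring
  rw [h1]
  calc (∑ i, shat i) * (c t / cbar) ≤ cbar * (c t / cbar) :=
        mul_le_mul_of_nonneg_right hsum (div_nonneg (hc0 t) hcbar.le)
    _ = c t := by field_simp
end

section
/- Let m ≥ 1, let f_1, …, f_m > 0 and c̄ ≥ 0, and let P = { s ∈ ℝ^m : 0 ≤ s_i ≤ f_i for all i, and Σ_{i=1}^m s_i ≤ c̄ }. Then every extreme point s of P has at most one fractional coordinate: the set {i : 0 < s_i < f_i} has cardinality at most 1. -/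
/-- Every extreme point of the polytope
`P = { s : 0 ≤ s_i ≤ f_i, Σ s_i ≤ c̄ }` has at most one fractional coordinate. -/
theorem extreme_points_at_most_one_fractional
    (m : ℕ) (hm : 1 ≤ m) (f : Fin m → ℝ) (hf : ∀ i, 0 < f i) (cbar : ℝ) (hcbar : 0 ≤ cbar)
    (s : Fin m → ℝ)
    (hs : s ∈ Set.extremePoints ℝ
      {x : Fin m → ℝ | (∀ i, 0 ≤ x i ∧ x i ≤ f i) ∧ ∑ i, x i ≤ cbar}) :
    ({i : Fin m | 0 < s i ∧ s i < f i}).ncard ≤ 1 := by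
  by_contra h
  push_neg at h
  obtain ⟨i, j, hi, hj, hij⟩ := (Set.one_lt_ncard_iff (Set.toFinite _)).1 h
  simp only [Set.mem_setOf_eq] at hi hj
  obtain ⟨hsP, hext⟩ := hs
  simp only [Set.mem_setOf_eq] at hsP
  set ε : ℝ := min (min (s i) (f i - s i)) (min (s j) (f j - s j)) with hε
  have hε0 : 0 < ε := by
    simp only [hε, lt_min_iff]
    exact ⟨⟨hi.1, by linarith [hi.2]⟩, ⟨hj.1, by linarith [hj.2]⟩⟩
  have hεi1 : ε ≤ s i := le_trans (min_le_left _ _) (min_le_left _ _)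
  have hεi2 : ε ≤ f i - s i := le_trans (min_le_left _ _) (min_le_right _ _)
  have hεj1 : ε ≤ s j := le_trans (min_le_right _ _) (min_le_left _ _)
  have hεj2 : ε ≤ f j - s j := le_trans (min_le_right _ _) (min_le_right _ _)
  set g : Fin m → ℝ := fun k => (if k = i then ε else 0) - (if k = j then ε else 0) with hg
  have hgsum : ∑ k, g k = 0 := by
    simp [hg, Finset.sum_sub_distrib]
  have hgmem : ∀ (t : ℝ), |t| ≤ 1 → (s + t • g) ∈
      {x : Fin m → ℝ | (∀ i, 0 ≤ x i ∧ x i ≤ f i) ∧ ∑ i, x i ≤ cbar} := by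
    intro t ht
    have ht1 : -1 ≤ t := neg_le_of_abs_le ht
    have ht2 : t ≤ 1 := le_of_abs_le ht
    constructor
    · intro k
      have hk := hsP.1 k
      simp only [Pi.add_apply, Pi.smul_apply, smul_eq_mul, hg]
      split_ifs with h1 h2 h2
      · exact absurd (h1.symm.trans h2) hij
      · subst h1; constructor <;> nlinarith [hε0.le]
      · subst h2; constructor <;> nlinarith [hε0.le]
      · constructor <;> nlinarith [hk.1, hk.2]
    · have : ∑ k, (s k + t * g k) = ∑ k, s k + t * ∑ k, g k := by
        rw [Finset.mul_sum, Finset.sum_add_distrib]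
      simp only [Pi.add_apply, Pi.smul_apply, smul_eq_mul]
      rw [this, hgsum]
      simpa using hsP.2
  have hy := hgmem 1 (by norm_num)
  have hz := hgmem (-1) (by norm_num)
  have hopen : s ∈ openSegment ℝ (s + (1:ℝ) • g) (s + (-1:ℝ) • g) := by
    refine ⟨1/2, 1/2, by norm_num, by norm_num, by norm_num, ?_⟩
    funext k
    simp only [Pi.add_apply, Pi.smul_apply, smul_eq_mul]
    ring
  have := hext hy hz hopen
  have hgi : g i = ε := by
    simp [hg, fun hkj => hij hkj]
  have : s i + g i = s i := by
    have := congrFun this i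
    simpa using this
  rw [hgi] at this
  linarith
end

section
/- (Claim 2) Let m ≥ 1, and for each i ∈ {1, …, m} let V_i : ℝ → ℝ be continuous, concave, and nondecreasing with V_i(0) = 0; let f_1, …, f_m > 0 and c̄ ≥ 0, and let P = { s ∈ ℝ^m : 0 ≤ s_i ≤ f_i for all i, and Σ_{i=1}^m s_i ≤ c̄ }. Then there exists a global minimizer s* of the objective (1/m) Σ_{i=1}^m V_i(f_i − s_i) over P such that the set {i : 0 < s*_i < f_i} has cardinality at most 1. -/
set_option maxHeartbeats 1000000


/-- Claim 2: there is a global minimizer of `(1/m) Σ_i V_i(f_i − s_i)` over the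
polytope `P` with at most one coordinate strictly between `0` and `f_i`. -/
theorem exists_minimizer_at_most_one_fractional
    (m : ℕ) (hm : 1 ≤ m)
    (V : Fin m → ℝ → ℝ)
    (hVcont : ∀ i, Continuous (V i))
    (hVconc : ∀ i, ConcaveOn ℝ Set.univ (V i))
    (hVmono : ∀ i, Monotone (V i))
    (hV0 : ∀ i, V i 0 = 0)
    (f : Fin m → ℝ) (hf : ∀ i, 0 < f i) (cbar : ℝ) (hcbar : 0 ≤ cbar) :
    ∃ sstar ∈ {x : Fin m → ℝ | (∀ i, 0 ≤ x i ∧ x i ≤ f i) ∧ ∑ i, x i ≤ cbar},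
      (∀ y ∈ {x : Fin m → ℝ | (∀ i, 0 ≤ x i ∧ x i ≤ f i) ∧ ∑ i, x i ≤ cbar},
        (1 / (m : ℝ)) * ∑ i, V i (f i - sstar i) ≤ (1 / (m : ℝ)) * ∑ i, V i (f i - y i)) ∧
      ({i : Fin m | 0 < sstar i ∧ sstar i < f i}).ncard ≤ 1 := by
  classical
  set P : Set (Fin m → ℝ) := {x | (∀ i, 0 ≤ x i ∧ x i ≤ f i) ∧ ∑ i, x i ≤ cbar} with hPdef
  set g : (Fin m → ℝ) → ℝ := fun x => ∑ i, V i (f i - x i) with hgdef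
  have hPne : P.Nonempty := ⟨0, fun i => ⟨le_rfl, (hf i).le⟩, by simpa using hcbar⟩
  have hgcont : Continuous g := continuous_finset_sum _ fun i _ =>
    (hVcont i).comp (continuous_const.sub (continuous_apply i))
  have hPeq : P = (Set.pi Set.univ fun i => Set.Icc 0 (f i)) ∩ {x | ∑ i, x i ≤ cbar} := by
    ext x
    simp only [hPdef, Set.mem_setOf_eq, Set.mem_inter_iff, Set.mem_univ_pi, Set.mem_Icc]
  have hPcomp : IsCompact P := by
    rw [hPeq]
    exact (isCompact_univ_pi fun i => isCompact_Icc).inter_right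
      (isClosed_le (continuous_finset_sum _ fun i _ => continuous_apply i) continuous_const)
  obtain ⟨s₀, hs₀P, hs₀min⟩ := hPcomp.exists_isMinOn hPne hgcont.continuousOn
  set S : Set ℕ := {n | ∃ x, x ∈ P ∧ (∀ y ∈ P, g x ≤ g y) ∧
      ({i : Fin m | 0 < x i ∧ x i < f i}).ncard = n} with hSdef
  have hSne : S.Nonempty := ⟨_, s₀, hs₀P, fun y hy => hs₀min hy, rfl⟩
  obtain ⟨s, hsP, hsmin, hscount⟩ := Nat.sInf_mem hSne
  have hn1 : sInf S ≤ 1 := by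
    by_contra hcon
    push_neg at hcon
    have h2 : 1 < ({i : Fin m | 0 < s i ∧ s i < f i}).ncard := hscount ▸ hcon
    obtain ⟨i, j, hi, hj, hij⟩ := (Set.one_lt_ncard_iff (Set.toFinite _)).mp h2
    obtain ⟨hi0, hif⟩ := hi
    obtain ⟨hj0, hjf⟩ := hj
    set a := min (s i) (f j - s j) with hadef
    set b := min (f i - s i) (s j) with hbdef
    have ha : 0 < a := lt_min hi0 (sub_pos.mpr hjf)
    have hb : 0 < b := lt_min (sub_pos.mpr hif) hj0
    have hab : 0 < a + b := by linarith
    set u : Fin m → ℝ := fun k => if k = i then s i - a else if k = j then s j + a else s k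
      with hudef
    set w : Fin m → ℝ := fun k => if k = i then s i + b else if k = j then s j - b else s k
      with hwdef
    have hui : u i = s i - a := by simp [hudef]
    have huj : u j = s j + a := by simp [hudef, hij.symm]
    have hwi : w i = s i + b := by simp [hwdef]
    have hwj : w j = s j - b := by simp [hwdef, hij.symm]
    have huk : ∀ k, k ≠ i → k ≠ j → u k = s k := by intro k h1 h2; simp [hudef, h1, h2]
    have hwk : ∀ k, k ≠ i → k ≠ j → w k = s k := by intro k h1 h2; simp [hwdef, h1, h2]
    have hsumu : ∑ k, u k = ∑ k, s k := by
      have : ∑ k, (u k - s k) = (u i - s i) + (u j - s j) :=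
        Finset.sum_eq_add_of_mem i j (Finset.mem_univ _) (Finset.mem_univ _) hij
          (fun c _ hc => by rw [huk c hc.1 hc.2]; ring)
      have h0 : ∑ k, (u k - s k) = 0 := by rw [this, hui, huj]; ring
      have := Finset.sum_sub_distrib (f := u) (g := s) (s := Finset.univ)
      linarith [this ▸ h0]
    have hsumw : ∑ k, w k = ∑ k, s k := by
      have : ∑ k, (w k - s k) = (w i - s i) + (w j - s j) :=
        Finset.sum_eq_add_of_mem i j (Finset.mem_univ _) (Finset.mem_univ _) hij
          (fun c _ hc => by rw [hwk c hc.1 hc.2]; ring)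
      have h0 : ∑ k, (w k - s k) = 0 := by rw [this, hwi, hwj]; ring
      have := Finset.sum_sub_distrib (f := w) (g := s) (s := Finset.univ)
      linarith [this ▸ h0]
    have hai : a ≤ s i := min_le_left _ _
    have haj : a ≤ f j - s j := min_le_right _ _
    have hbi : b ≤ f i - s i := min_le_left _ _
    have hbj : b ≤ s j := min_le_right _ _
    have huP : u ∈ P := by
      refine ⟨fun k => ?_, by rw [hsumu]; exact hsP.2⟩
      by_cases h1 : k = i
      · subst h1; rw [hui]; constructor <;> linarith
      by_cases h2 : k = j
      · subst h2; rw [huj]; constructor <;> linarith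
      · rw [huk k h1 h2]; exact hsP.1 k
    have hwP : w ∈ P := by
      refine ⟨fun k => ?_, by rw [hsumw]; exact hsP.2⟩
      by_cases h1 : k = i
      · subst h1; rw [hwi]; constructor <;> linarith
      by_cases h2 : k = j
      · subst h2; rw [hwj]; constructor <;> linarith
      · rw [hwk k h1 h2]; exact hsP.1 k
    set lam := b / (a + b) with hlamdef
    set mu := a / (a + b) with hmudef
    have hlam0 : 0 ≤ lam := by positivity
    have hmu0 : 0 ≤ mu := by positivity
    have hlampos : 0 < lam := by positivity
    have hmupos : 0 < mu := by positivity
    have hlm : lam + mu = 1 := by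
      rw [hlamdef, hmudef, ← add_div, add_comm b a, div_self hab.ne']
    have hkey : ∀ k, lam * V k (f k - u k) + mu * V k (f k - w k) ≤ V k (f k - s k) := by
      intro k
      by_cases h1 : k = i
      · subst h1
        have := (hVconc k).2 (Set.mem_univ (f k - u k)) (Set.mem_univ (f k - w k))
          hlam0 hmu0 hlm
        have hcomb : lam • (f k - u k) + mu • (f k - w k) = f k - s k := by
          rw [hui, hwi, smul_eq_mul, smul_eq_mul, hlamdef, hmudef]
          field_simp
          ring
        rw [hcomb] at this
        simpa [smul_eq_mul] using this
      by_cases h2 : k = j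
      · subst h2
        have := (hVconc k).2 (Set.mem_univ (f k - u k)) (Set.mem_univ (f k - w k))
          hlam0 hmu0 hlm
        have hcomb : lam • (f k - u k) + mu • (f k - w k) = f k - s k := by
          rw [huj, hwj, smul_eq_mul, smul_eq_mul, hlamdef, hmudef]
          field_simp
          ring
        rw [hcomb] at this
        simpa [smul_eq_mul] using this
      · rw [huk k h1 h2, hwk k h1 h2]
        have : lam * V k (f k - s k) + mu * V k (f k - s k) = V k (f k - s k) := by
          rw [← add_mul, hlm, one_mul]
        exact this.le
    have hsum : lam * g u + mu * g w ≤ g s := by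
      have h1 : ∑ k, (lam * V k (f k - u k) + mu * V k (f k - w k)) ≤
          ∑ k, V k (f k - s k) := Finset.sum_le_sum fun k _ => hkey k
      simp only [hgdef, Finset.mul_sum, ← Finset.sum_add_distrib]
      exact h1
    have hgu : g s ≤ g u := hsmin u huP
    have hgw : g s ≤ g w := hsmin w hwP
    have hgueq : g u = g s := by
      have e : lam * g s + mu * g s = g s := by rw [← add_mul, hlm, one_mul]
      have e1 : mu * g s ≤ mu * g w := mul_le_mul_of_nonneg_left hgw hmu0
      have e2 : lam * g u ≤ lam * g s := by linarith
      have e3 := le_of_mul_le_mul_left e2 hlampos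
      linarith
    have humin : ∀ y ∈ P, g u ≤ g y := fun y hy => hgueq ▸ hsmin y hy
    have hsub : {k : Fin m | 0 < u k ∧ u k < f k} ⊆ {k : Fin m | 0 < s k ∧ s k < f k} := by
      intro k hk
      obtain ⟨hk1, hk2⟩ := hk
      by_cases h1 : k = i
      · subst h1; exact ⟨hi0, hif⟩
      by_cases h2 : k = j
      · subst h2; exact ⟨hj0, hjf⟩
      · rw [huk k h1 h2] at hk1 hk2; exact ⟨hk1, hk2⟩
    have hssub : {k : Fin m | 0 < u k ∧ u k < f k} ⊂ {k : Fin m | 0 < s k ∧ s k < f k} := by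
      refine hsub.ssubset_of_ne ?_
      intro heq
      rcases le_total (s i) (f j - s j) with h | h
      · have hae : a = s i := min_eq_left h
        have : i ∈ {k : Fin m | 0 < u k ∧ u k < f k} := heq ▸ (by exact ⟨hi0, hif⟩)
        rw [Set.mem_setOf_eq, hui, hae] at this
        linarith [this.1]
      · have hae : a = f j - s j := min_eq_right h
        have : j ∈ {k : Fin m | 0 < u k ∧ u k < f k} := heq ▸ (by exact ⟨hj0, hjf⟩)
        rw [Set.mem_setOf_eq, huj, hae] at this
        linarith [this.2]
    have hlt := Set.ncard_lt_ncard hssub (Set.toFinite _)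
    have hle : sInf S ≤ ({k : Fin m | 0 < u k ∧ u k < f k}).ncard :=
      Nat.sInf_le ⟨u, huP, humin, rfl⟩
    omega
  refine ⟨s, hsP, ?_, hscount ▸ hn1⟩
  intro y hy
  have h1m : (0 : ℝ) ≤ 1 / (m : ℝ) := by positivity
  exact mul_le_mul_of_nonneg_left (hsmin y hy) h1m
end

section
/- (Theorem 2, optimality gap of the linearized allocation) Let m ≥ 1, and for each i ∈ {1, …, m} let V_i : ℝ → ℝ be continuous, concave, and nondecreasing with V_i(0) = 0; let f_1, …, f_m > 0 and c̄ ≥ 0, and let P = { s ∈ ℝ^m : 0 ≤ s_i ≤ f_i for all i, and Σ_{i=1}^m s_i ≤ c̄ }. Let V̄ be the minimum of (1/m) Σ_{i=1}^m V_i(f_i − s_i) over s ∈ P. Suppose s^lp ∈ P minimizes the linearized objective (1/m) Σ_{i=1}^m (1 − s_i/f_i) V_i(f_i) over P and satisfies that the set {i : 0 < s^lp_i < f_i} has cardinality at most 1. Then (1/m) Σ_{i=1}^m V_i(f_i − s^lp_i) ≤ V̄ + (2/m) · max_{1 ≤ i ≤ m} V_i(f_i). -/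
lemma key_lin {V : ℝ → ℝ} (hconc : ConcaveOn ℝ Set.univ V) (hV0 : V 0 = 0)
    {fv s : ℝ} (hf : 0 < fv) (hs : 0 ≤ s) (hsf : s ≤ fv) :
    (1 - s / fv) * V fv ≤ V (fv - s) := by
  have ha : (0:ℝ) ≤ 1 - s / fv := by
    have : s / fv ≤ 1 := (div_le_one hf).2 hsf
    linarith
  have hb : (0:ℝ) ≤ s / fv := div_nonneg hs hf.le
  have hab : (1 - s / fv) + s / fv = 1 := by ring
  have := hconc.2 (Set.mem_univ fv) (Set.mem_univ 0) ha hb hab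
  simp only [smul_eq_mul, mul_zero, add_zero, hV0] at this
  have hx : (1 - s / fv) * fv = fv - s := by field_simp
  rw [hx] at this
  linarith

/-- Theorem 2: if `s^lp` minimizes the linearized objective over `P` and has at
most one fractional coordinate, then its true cost is within
`(2/m) · max_i V_i(f_i)` of the optimum `V̄` of the concave program. -/
theorem lp_optimality_gap
    (m : ℕ) (hm : 1 ≤ m)
    (V : Fin m → ℝ → ℝ)
    (hVcont : ∀ i, Continuous (V i))
    (hVconc : ∀ i, ConcaveOn ℝ Set.univ (V i))
    (hVmono : ∀ i, Monotone (V i))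
    (hV0 : ∀ i, V i 0 = 0)
    (f : Fin m → ℝ) (hf : ∀ i, 0 < f i) (cbar : ℝ) (hcbar : 0 ≤ cbar)
    (Vbar : ℝ)
    (hVbar : IsLeast
      ((fun x : Fin m → ℝ => (1 / (m : ℝ)) * ∑ i, V i (f i - x i)) ''
        {x : Fin m → ℝ | (∀ i, 0 ≤ x i ∧ x i ≤ f i) ∧ ∑ i, x i ≤ cbar}) Vbar)
    (slp : Fin m → ℝ)
    (hslpP : slp ∈ {x : Fin m → ℝ | (∀ i, 0 ≤ x i ∧ x i ≤ f i) ∧ ∑ i, x i ≤ cbar})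
    (hslpmin : ∀ y ∈ {x : Fin m → ℝ | (∀ i, 0 ≤ x i ∧ x i ≤ f i) ∧ ∑ i, x i ≤ cbar},
      (1 / (m : ℝ)) * ∑ i, (1 - slp i / f i) * V i (f i) ≤
        (1 / (m : ℝ)) * ∑ i, (1 - y i / f i) * V i (f i))
    (hslpfrac : ({i : Fin m | 0 < slp i ∧ slp i < f i}).ncard ≤ 1) :
    (1 / (m : ℝ)) * ∑ i, V i (f i - slp i) ≤
      Vbar + (2 / (m : ℝ)) *
        Finset.univ.sup' (Finset.univ_nonempty_iff.mpr ⟨⟨0, hm⟩⟩) (fun i => V i (f i)) := by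
  have hmpos : (0:ℝ) < m := by exact_mod_cast hm
  set M : ℝ := Finset.univ.sup' (Finset.univ_nonempty_iff.mpr ⟨⟨0, hm⟩⟩) (fun i => V i (f i)) with hM
  have hVfnn : ∀ i, 0 ≤ V i (f i) := fun i => by
    have := hVmono i (hf i).le; rw [hV0 i] at this; exact this
  have hM0 : 0 ≤ M := le_trans (hVfnn ⟨0, hm⟩)
    (Finset.le_sup' (fun i => V i (f i)) (Finset.mem_univ _))
  have hMle : ∀ i, V i (f i) ≤ M := fun i =>
    Finset.le_sup' (fun i => V i (f i)) (Finset.mem_univ i)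
  -- linearized objective at slp ≤ Vbar
  obtain ⟨x, hxP, hx⟩ := hVbar.1
  have hlin : (1 / (m : ℝ)) * ∑ i, (1 - slp i / f i) * V i (f i) ≤ Vbar := by
    refine le_trans (hslpmin x hxP) ?_
    rw [← hx]
    apply mul_le_mul_of_nonneg_left _ (by positivity)
    apply Finset.sum_le_sum
    intro i _
    exact key_lin (hVconc i) (hV0 i) (hf i) (hxP.1 i).1 (hxP.1 i).2
  -- gap bound
  set S : Set (Fin m) := {i : Fin m | 0 < slp i ∧ slp i < f i} with hS
  have hterm0 : ∀ i, i ∉ S → V i (f i - slp i) - (1 - slp i / f i) * V i (f i) = 0 := by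
    intro i hi
    simp only [hS, Set.mem_setOf_eq, not_and_or, not_lt] at hi
    rcases hi with h | h
    · have h0 : slp i = 0 := le_antisymm h (hslpP.1 i).1
      simp [h0]
    · have h0 : slp i = f i := le_antisymm (hslpP.1 i).2 h
      rw [h0, sub_self, hV0 i, div_self (hf i).ne', sub_self, zero_mul]; ring
  have htermM : ∀ i, V i (f i - slp i) - (1 - slp i / f i) * V i (f i) ≤ M := by
    intro i
    have h1 : V i (f i - slp i) ≤ V i (f i) := hVmono i (by linarith [(hslpP.1 i).1])
    have h2 : 0 ≤ (1 - slp i / f i) * V i (f i) := by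
      have : slp i / f i ≤ 1 := (div_le_one (hf i)).2 (hslpP.1 i).2
      exact mul_nonneg (by linarith) (hVfnn i)
    linarith [hMle i]
  have hsumgap : ∑ i, (V i (f i - slp i) - (1 - slp i / f i) * V i (f i)) ≤ M := by
    have hSfin : S.Finite := Set.toFinite S
    rcases (Set.ncard_le_one_iff_eq hSfin).mp hslpfrac with h | ⟨j, h⟩
    · calc ∑ i, (V i (f i - slp i) - (1 - slp i / f i) * V i (f i))
          = ∑ i : Fin m, (0:ℝ) := Finset.sum_congr rfl (fun i _ => hterm0 i (by simp [h]))
        _ = 0 := by simp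
        _ ≤ M := hM0
    · calc ∑ i, (V i (f i - slp i) - (1 - slp i / f i) * V i (f i))
          = V j (f j - slp j) - (1 - slp j / f j) * V j (f j) := by
            rw [Finset.sum_eq_single j]
            · intro i _ hi
              exact hterm0 i (by simp [h, hi])
            · intro hj; exact absurd (Finset.mem_univ j) hj
        _ ≤ M := htermM j
  have hsum : ∑ i, V i (f i - slp i) ≤ (∑ i, (1 - slp i / f i) * V i (f i)) + M := by
    have := hsumgap
    rw [Finset.sum_sub_distrib] at this
    linarith
  calc (1 / (m : ℝ)) * ∑ i, V i (f i - slp i)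
      ≤ (1 / (m : ℝ)) * ((∑ i, (1 - slp i / f i) * V i (f i)) + M) :=
        mul_le_mul_of_nonneg_left hsum (by positivity)
    _ = (1 / (m : ℝ)) * ∑ i, (1 - slp i / f i) * V i (f i) + (1 / (m : ℝ)) * M := by ring
    _ ≤ Vbar + (2 / (m : ℝ)) * M := by
        have : (1 / (m : ℝ)) * M ≤ (2 / (m : ℝ)) * M := by
          apply mul_le_mul_of_nonneg_right _ hM0
          gcongr
          norm_num
        linarith
end

section
/- (Claim 3, convex part) Let 0 ≤ a ≤ b, let p : ℝ → ℝ be nonnegative, continuous, and nonincreasing on [a, b], and let V : ℝ → ℝ be twice continuously differentiable on [0, b] with V(0) = 0, V′ ≥ 0 on [0, b], and V″ ≤ 0 on [0, b]. Define K(s) = ∫_a^b V(max(f − s, 0)) p(f) df for s ∈ [0, b]. Then K is convex on [a, b]. -/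
open MeasureTheory Set

/-- The primitive `y ↦ ∫_y^c q` of a function antitone on `[a, c]` is convex on `[a, c]`. -/
lemma convexOn_integral_right_aux {q : ℝ → ℝ} {a c : ℝ} (hac : a ≤ c)
    (hq : AntitoneOn q (Set.Icc a c)) :
    ConvexOn ℝ (Set.Icc a c) (fun y => ∫ x in y..c, q x) := by
  apply convexOn_of_slope_mono_adjacent (convex_Icc a c)
  intro x y z hx hz hxy hyz
  have hy : y ∈ Set.Icc a c := ⟨le_trans hx.1 hxy.le, le_trans hyz.le hz.2⟩
  have hint : ∀ u v : ℝ, u ∈ Set.Icc a c → v ∈ Set.Icc a c →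
      IntervalIntegrable q volume u v := by
    intro u v hu hv
    exact (hq.mono (Set.uIcc_subset_Icc hu hv)).intervalIntegrable
  have hxyint := hint x y hx hy
  have hyzint := hint y z hy hz
  have hsplit1 : ∫ t in x..c, q t = (∫ t in x..y, q t) + ∫ t in y..c, q t :=
    (intervalIntegral.integral_add_adjacent_intervals hxyint
      (hint y c hy (Set.right_mem_Icc.2 hac))).symm
  have hsplit2 : ∫ t in y..c, q t = (∫ t in y..z, q t) + ∫ t in z..c, q t :=
    (intervalIntegral.integral_add_adjacent_intervals hyzint
      (hint z c hz (Set.right_mem_Icc.2 hac))).symm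
  have h1 : q y * (y - x) ≤ ∫ t in x..y, q t := by
    have := intervalIntegral.integral_mono_on hxy.le
      (_root_.intervalIntegrable_const (c := q y)) hxyint
      (fun t ht => hq ⟨hx.1.trans ht.1, ht.2.trans hy.2⟩ hy ht.2)
    simpa [mul_comm] using this
  have h2 : (∫ t in y..z, q t) ≤ q y * (z - y) := by
    have := intervalIntegral.integral_mono_on hyz.le hyzint
      (_root_.intervalIntegrable_const (c := q y))
      (fun t ht => hq hy ⟨hy.1.trans ht.1, ht.2.trans hz.2⟩ ht.1)
    simpa [mul_comm] using this
  rw [div_le_div_iff₀ (by linarith) (by linarith)]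
  nlinarith [h1, h2, sub_pos.2 hxy, sub_pos.2 hyz, hsplit1, hsplit2]

/-- Claim 3 (convex part): if the prior density `p` is nonincreasing on `[a, b]`
and `V` is `C²`, nondecreasing and concave on `[0, b]` with `V 0 = 0`, then the
expected dissatisfaction `K(s) = ∫_a^b V(max (f − s) 0) p(f) df` is convex on `[a, b]`. -/
theorem expected_dissatisfaction_convex
    (a b : ℝ) (ha : 0 ≤ a) (hab : a ≤ b)
    (p : ℝ → ℝ) (hp0 : ∀ x ∈ Set.Icc a b, 0 ≤ p x)
    (hpcont : ContinuousOn p (Set.Icc a b))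
    (hpanti : AntitoneOn p (Set.Icc a b))
    (V : ℝ → ℝ)
    (hV : ContDiffOn ℝ 2 V (Set.Icc 0 b))
    (hV0 : V 0 = 0)
    (hV' : ∀ x ∈ Set.Icc (0 : ℝ) b, 0 ≤ derivWithin V (Set.Icc 0 b) x)
    (hV'' : ∀ x ∈ Set.Icc (0 : ℝ) b,
      derivWithin (derivWithin V (Set.Icc 0 b)) (Set.Icc 0 b) x ≤ 0)
    (K : ℝ → ℝ)
    (hK : ∀ s, K s = ∫ x in a..b, V (max (x - s) 0) * p x) :
    ConvexOn ℝ (Set.Icc a b) K := by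
  have hb0 : (0:ℝ) ≤ b := ha.trans hab
  rcases eq_or_lt_of_le hb0 with hb | hb
  · -- degenerate case `b = 0`, so `a = b = 0` and the interval is a point
    have ha0 : a = 0 := le_antisymm (hab.trans hb.symm.le) ha
    refine ⟨convex_Icc a b, ?_⟩
    intro x hx y hy lam mu hlam hmu hlm
    have hx0 : x = 0 := le_antisymm (hx.2.trans hb.symm.le) (ha0 ▸ hx.1)
    have hy0 : y = 0 := le_antisymm (hy.2.trans hb.symm.le) (ha0 ▸ hy.1)
    simp only [hx0, hy0, smul_eq_mul, mul_zero, add_zero]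
    have : lam * K 0 + mu * K 0 = K 0 := by linear_combination (K 0) * hlm
    linarith
  -- main case `0 < b`
  set g := derivWithin V (Set.Icc 0 b) with hg
  have hgcont : ContinuousOn g (Set.Icc 0 b) := by
    have := hV.derivWithin (uniqueDiffOn_Icc hb) (m := 1) (by norm_num)
    exact this.continuousOn
  set gc := fun t : ℝ => g (max 0 (min t b)) with hgcdef
  have hclampg : ∀ t : ℝ, max 0 (min t b) ∈ Set.Icc 0 b :=
    fun t => ⟨le_max_left _ _, max_le hb.le (min_le_right _ _)⟩
  have hgc : Continuous gc :=
    hgcont.comp_continuous (by fun_prop) hclampg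
  have hgceq : ∀ t ∈ Set.Icc 0 b, gc t = g t := by
    intro t ht
    simp [hgcdef, min_eq_left ht.2, max_eq_right ht.1]
  set pc := fun x : ℝ => p (max a (min x b)) with hpcdef
  have hclampp : ∀ x : ℝ, max a (min x b) ∈ Set.Icc a b :=
    fun x => ⟨le_max_left _ _, max_le hab (min_le_right _ _)⟩
  have hpc : Continuous pc :=
    hpcont.comp_continuous (by fun_prop) hclampp
  have hpceq : ∀ x ∈ Set.Icc a b, pc x = p x := by
    intro x hx
    simp [hpcdef, min_eq_left hx.2, max_eq_right hx.1]
  -- the truncated density and its right primitive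
  set q := fun x : ℝ => if x ≤ b then pc x else 0 with hqdef
  have hqanti : AntitoneOn q (Set.Icc a (2 * b)) := by
    intro x hx y hy hxy
    by_cases hyb : y ≤ b
    · have hxb : x ≤ b := hxy.trans hyb
      simp only [hqdef, if_pos hyb, if_pos hxb]
      rw [hpceq x ⟨hx.1, hxb⟩, hpceq y ⟨hx.1.trans hxy, hyb⟩]
      exact hpanti ⟨hx.1, hxb⟩ ⟨hx.1.trans hxy, hyb⟩ hxy
    · simp only [hqdef, if_neg hyb]
      by_cases hxb : x ≤ b
      · simp only [if_pos hxb]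
        rw [hpceq x ⟨hx.1, hxb⟩]
        exact hp0 x ⟨hx.1, hxb⟩
      · simp [hxb]
  have hqint : ∀ u v : ℝ, u ∈ Set.Icc a (2 * b) → v ∈ Set.Icc a (2 * b) →
      IntervalIntegrable q volume u v := by
    intro u v hu hv
    exact (hqanti.mono (Set.uIcc_subset_Icc hu hv)).intervalIntegrable
  set P := fun y : ℝ => ∫ x in y..(2 * b), q x with hPdef
  have hPconv : ConvexOn ℝ (Set.Icc a (2 * b)) P :=
    convexOn_integral_right_aux (by linarith) hqanti
  -- continuity of P
  have hqintOn : IntegrableOn q (Set.Icc a (2 * b)) := by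
    rw [integrableOn_Icc_iff_integrableOn_Ioc]
    exact (hqint a (2 * b) ⟨le_rfl, by linarith⟩ ⟨by linarith, le_rfl⟩).1
  have hPcont : ContinuousOn P (Set.Icc a (2 * b)) := by
    apply ContinuousOn.congr
      ((continuousOn_const (c := ∫ x in a..(2 * b), q x)).sub
        (intervalIntegral.continuousOn_primitive hqintOn))
    intro y hy
    have hsplit : (∫ x in a..y, q x) + ∫ x in y..(2 * b), q x = ∫ x in a..(2 * b), q x :=
      intervalIntegral.integral_add_adjacent_intervals
        (hqint a y ⟨le_rfl, by linarith⟩ hy) (hqint y (2 * b) hy ⟨by linarith, le_rfl⟩)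
    have hIoc : ∫ t in Set.Ioc a y, q t = ∫ x in a..y, q x :=
      (intervalIntegral.integral_of_le hy.1).symm
    simp only [hPdef, Pi.sub_apply]
    rw [hIoc]
    linarith [hsplit]
  -- FTC: ∫_0^c g = V c for c ∈ [0, b]
  have hFTC : ∀ c ∈ Set.Icc (0:ℝ) b, ∫ t in (0:ℝ)..c, g t = V c := by
    intro c hc
    rcases eq_or_lt_of_le hc.1 with h0 | h0
    · simp [← h0, hV0]
    · have hcont : ContinuousOn V (Set.Icc 0 c) :=
        (hV.continuousOn).mono (Set.Icc_subset_Icc le_rfl hc.2)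
      have hderiv : ∀ t ∈ Set.Ioo (0:ℝ) c, HasDerivWithinAt V (g t) (Set.Ioi t) t := by
        intro t ht
        have htb : t ∈ Set.Icc (0:ℝ) b := ⟨ht.1.le, ht.2.le.trans hc.2⟩
        have hd : HasDerivWithinAt V (g t) (Set.Icc 0 b) t :=
          ((hV.differentiableOn (by norm_num) t htb).hasDerivWithinAt)
        have hmem : Set.Icc (0:ℝ) b ∈ nhds t :=
          Icc_mem_nhds ht.1 (lt_of_lt_of_le ht.2 hc.2)
        exact (hd.hasDerivAt hmem).hasDerivWithinAt
      have hint : IntervalIntegrable g volume 0 c :=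
        (hgcont.mono (Set.Icc_subset_Icc le_rfl hc.2)).intervalIntegrable_of_Icc hc.1
      rw [intervalIntegral.integral_eq_sub_of_hasDeriv_right_of_le hc.1 hcont hderiv hint, hV0,
        sub_zero]
  -- key representation K s = ∫_0^b gc t * P (s + t) dt
  have hrep : ∀ s ∈ Set.Icc a b, K s = ∫ t in (0:ℝ)..b, gc t * P (s + t) := by
    intro s hs
    -- pointwise identity in x
    have hVx : ∀ x ∈ Set.Ioc a b, V (max (x - s) 0) * p x
        = ∫ t in Set.Ioc (0:ℝ) b, (if s + t < x then gc t * pc x else 0) := by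
      intro x hx
      have hxab : x ∈ Set.Icc a b := ⟨hx.1.le, hx.2⟩
      have hc : max (x - s) 0 ∈ Set.Icc (0:ℝ) b :=
        ⟨le_max_right _ _, max_le (by linarith [hs.1, hx.2, ha]) hb.le⟩
      have key : ∫ t in (0:ℝ)..(max (x - s) 0), g t
          = ∫ t in Set.Ioc (0:ℝ) b, (if t < x - s then gc t else 0) := by
        rcases le_or_gt (x - s) 0 with hxs | hxs
        · rw [max_eq_right hxs, intervalIntegral.integral_same]
          rw [setIntegral_congr_fun measurableSet_Ioc
            (g := fun _ => (0:ℝ)) (fun t ht => if_neg (by push_neg; linarith [ht.1]))]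
          simp
        · rw [max_eq_left hxs.le]
          have h1 : (fun t => if t < x - s then gc t else 0)
              = Set.indicator (Set.Iio (x - s)) gc := by
            funext t; simp [Set.indicator_apply]
          rw [h1, setIntegral_indicator measurableSet_Iio]
          have h2 : Set.Ioc (0:ℝ) b ∩ Set.Iio (x - s) = Set.Ioo 0 (x - s) := by
            ext t
            simp only [Set.mem_inter_iff, Set.mem_Ioc, Set.mem_Iio, Set.mem_Ioo]
            constructor
            · rintro ⟨⟨ht1, _⟩, ht2⟩; exact ⟨ht1, ht2⟩
            · rintro ⟨ht1, ht2⟩; exact ⟨⟨ht1, by linarith [hc.2, max_eq_left hxs.le]⟩, ht2⟩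
          rw [h2, ← integral_Ioc_eq_integral_Ioo,
            setIntegral_congr_fun measurableSet_Ioc
              (g := g) (fun t ht => hgceq t
                ⟨ht.1.le, by linarith [ht.2, hc.2, max_eq_left hxs.le]⟩),
            ← intervalIntegral.integral_of_le hxs.le]
      rw [← hpceq x hxab, ← hFTC _ hc, key, ← integral_mul_const]
      apply setIntegral_congr_fun measurableSet_Ioc
      intro t ht
      dsimp only
      by_cases h : s + t < x
      · rw [if_pos h, if_pos (show t < x - s by linarith)]
      · rw [if_neg h, if_neg (show ¬ t < x - s by intro h2; exact h (by linarith)), zero_mul]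
    -- integrability on the product
    have hFint : Integrable
        (Function.uncurry fun x t => if s + t < x then gc t * pc x else 0)
        ((volume.restrict (Set.Ioc a b)).prod (volume.restrict (Set.Ioc (0:ℝ) b))) := by
      haveI : IsFiniteMeasure (volume.restrict (Set.Ioc a b)) :=
        ⟨by rw [Measure.restrict_apply_univ]; exact measure_Ioc_lt_top⟩
      haveI : IsFiniteMeasure (volume.restrict (Set.Ioc (0:ℝ) b)) :=
        ⟨by rw [Measure.restrict_apply_univ]; exact measure_Ioc_lt_top⟩
      have hset : MeasurableSet {z : ℝ × ℝ | s + z.2 < z.1} :=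
        measurableSet_lt (measurable_const.add measurable_snd) measurable_fst
      have hcont : Continuous (fun z : ℝ × ℝ => gc z.2 * pc z.1) :=
        (hgc.comp continuous_snd).mul (hpc.comp continuous_fst)
      have heq : (Function.uncurry fun x t => if s + t < x then gc t * pc x else 0)
          = Set.indicator {z : ℝ × ℝ | s + z.2 < z.1} (fun z => gc z.2 * pc z.1) := by
        funext z
        simp [Function.uncurry, Set.indicator_apply]
      rw [heq]
      obtain ⟨M1, hM1⟩ := (isCompact_Icc (a := (0:ℝ)) (b := b)).exists_bound_of_continuousOn
        hgc.continuousOn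
      obtain ⟨M2, hM2⟩ := (isCompact_Icc (a := a) (b := b)).exists_bound_of_continuousOn
        hpc.continuousOn
      have hM1' : 0 ≤ M1 := le_trans (norm_nonneg (gc 0)) (hM1 0 ⟨le_rfl, hb0⟩)
      have hM2' : 0 ≤ M2 := le_trans (norm_nonneg (pc a)) (hM2 a ⟨le_rfl, hab⟩)
      apply Integrable.mono' (integrable_const (M1 * M2))
        (hcont.aestronglyMeasurable.indicator hset)
      rw [Measure.prod_restrict]
      filter_upwards [ae_restrict_mem (measurableSet_Ioc.prod measurableSet_Ioc)] with z hz
      rcases hz with ⟨hz1, hz2⟩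
      rw [Set.indicator_apply]
      by_cases h : z ∈ {z : ℝ × ℝ | s + z.2 < z.1}
      · rw [if_pos h]
        calc ‖gc z.2 * pc z.1‖ = ‖gc z.2‖ * ‖pc z.1‖ := norm_mul _ _
        _ ≤ M1 * M2 := mul_le_mul (hM1 z.2 ⟨hz2.1.le, hz2.2⟩) (hM2 z.1 ⟨hz1.1.le, hz1.2⟩)
            (norm_nonneg _) hM1'
      · rw [if_neg h]; simpa using mul_nonneg hM1' hM2'
    -- inner integral after the swap
    have hinner : ∀ t ∈ Set.Ioc (0:ℝ) b,
        ∫ x in Set.Ioc a b, (if s + t < x then gc t * pc x else 0) = gc t * P (s + t) := by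
      intro t ht
      set y := s + t with hy
      have hya : a ≤ y := le_trans hs.1 (by linarith [ht.1])
      have hy2b : y ≤ 2 * b := by linarith [hs.2, ht.2]
      have h1 : (fun x => if s + t < x then gc t * pc x else 0)
          = Set.indicator (Set.Ioi y) (fun x => gc t * pc x) := by
        funext x; simp [Set.indicator_apply, hy]
      rw [h1, setIntegral_indicator measurableSet_Ioi, Set.Ioc_inter_Ioi,
        integral_const_mul]
      congr 1
      have hmax : a ⊔ y = y := max_eq_right hya
      rw [hmax]
      rcases le_or_gt y b with hyb | hyb
      · have hsplit : P y = (∫ x in y..b, q x) + ∫ x in b..(2 * b), q x := by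
          show (∫ x in y..(2 * b), q x) = _
          rw [← intervalIntegral.integral_add_adjacent_intervals
            (hqint y b ⟨hya, hy2b⟩ ⟨hab, by linarith⟩)
            (hqint b (2 * b) ⟨hab, by linarith⟩ ⟨by linarith, le_rfl⟩)]
        have hz : ∫ x in b..(2 * b), q x = 0 := by
          rw [intervalIntegral.integral_of_le (by linarith)]
          rw [setIntegral_congr_fun measurableSet_Ioc (g := fun _ => (0:ℝ))
            (fun x hx => by simp only [hqdef]; exact if_neg (not_le.2 hx.1))]
          simp
        have hfirst : ∫ x in y..b, q x = ∫ x in Set.Ioc y b, pc x := by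
          rw [intervalIntegral.integral_of_le hyb]
          exact setIntegral_congr_fun measurableSet_Ioc
            (fun x hx => by simp only [hqdef]; exact if_pos hx.2)
        rw [hsplit, hz, add_zero, hfirst]
      · have he : Set.Ioc y b = ∅ := Set.Ioc_eq_empty (not_lt.2 hyb.le)
        rw [he]
        have hP0 : P y = 0 := by
          show (∫ x in y..(2 * b), q x) = 0
          rw [intervalIntegral.integral_of_le hy2b]
          rw [setIntegral_congr_fun measurableSet_Ioc (g := fun _ => (0:ℝ))
            (fun x hx => by simp only [hqdef]; exact if_neg (by push_neg; linarith [hx.1]))]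
          simp
        rw [hP0]
        simp
    calc K s = ∫ x in a..b, V (max (x - s) 0) * p x := hK s
      _ = ∫ x in Set.Ioc a b, V (max (x - s) 0) * p x :=
          intervalIntegral.integral_of_le hab
      _ = ∫ x in Set.Ioc a b, ∫ t in Set.Ioc (0:ℝ) b,
            (if s + t < x then gc t * pc x else 0) :=
          setIntegral_congr_fun measurableSet_Ioc hVx
      _ = ∫ t in Set.Ioc (0:ℝ) b, ∫ x in Set.Ioc a b,
            (if s + t < x then gc t * pc x else 0) :=
          integral_integral_swap hFint
      _ = ∫ t in Set.Ioc (0:ℝ) b, gc t * P (s + t) :=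
          setIntegral_congr_fun measurableSet_Ioc hinner
      _ = ∫ t in (0:ℝ)..b, gc t * P (s + t) :=
          (intervalIntegral.integral_of_le hb0).symm
  -- conclude convexity
  have hgc0 : ∀ t ∈ Set.Icc (0:ℝ) b, 0 ≤ gc t := by
    intro t ht
    rw [hgceq t ht]
    exact hV' t ht
  have hmem2 : ∀ s ∈ Set.Icc a b, ∀ t ∈ Set.Icc (0:ℝ) b, s + t ∈ Set.Icc a (2 * b) := by
    intro s hs t ht
    exact ⟨by linarith [hs.1, ht.1], by linarith [hs.2, ht.2]⟩
  have hci : ∀ s ∈ Set.Icc a b,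
      IntervalIntegrable (fun t => gc t * P (s + t)) volume 0 b := by
    intro s hs
    apply ContinuousOn.intervalIntegrable_of_Icc hb0
    exact hgc.continuousOn.mul
      (hPcont.comp ((continuous_const.add continuous_id).continuousOn) (hmem2 s hs))
  refine ⟨convex_Icc a b, ?_⟩
  intro s1 hs1 s2 hs2 lam mu hlam hmu hlm
  have hmem : lam • s1 + mu • s2 ∈ Set.Icc a b := (convex_Icc a b) hs1 hs2 hlam hmu hlm
  rw [hrep _ hmem, hrep _ hs1, hrep _ hs2]
  simp only [smul_eq_mul]
  have step : ∫ t in (0:ℝ)..b, gc t * P (lam • s1 + mu • s2 + t)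
      ≤ ∫ t in (0:ℝ)..b, (lam * (gc t * P (s1 + t)) + mu * (gc t * P (s2 + t))) := by
    apply intervalIntegral.integral_mono_on hb0 (hci _ hmem)
    · exact ((hci _ hs1).const_mul lam).add ((hci _ hs2).const_mul mu)
    · intro t ht
      have harg : lam • s1 + mu • s2 + t = lam • (s1 + t) + mu • (s2 + t) := by
        simp only [smul_eq_mul]; linear_combination (-t) * hlm
      have hconv := hPconv.2 (hmem2 s1 hs1 t ht) (hmem2 s2 hs2 t ht) hlam hmu hlm
      calc gc t * P (lam • s1 + mu • s2 + t)
          = gc t * P (lam • (s1 + t) + mu • (s2 + t)) := by rw [harg]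
        _ ≤ gc t * (lam • P (s1 + t) + mu • P (s2 + t)) :=
            mul_le_mul_of_nonneg_left hconv (hgc0 t ht)
        _ = lam * (gc t * P (s1 + t)) + mu * (gc t * P (s2 + t)) := by
            simp only [smul_eq_mul]; ring
  refine step.trans_eq ?_
  rw [intervalIntegral.integral_add ((hci _ hs1).const_mul lam) ((hci _ hs2).const_mul mu),
    intervalIntegral.integral_const_mul, intervalIntegral.integral_const_mul]
end

section
/- (Claim 4) Let m ≥ 1, 0 ≤ a ≤ b, c̄ ≥ 0, and let K : ℝ → ℝ be continuous on [0, b] and convex on [a, b]. Let D = { s ∈ ℝ^m : 0 ≤ s_i ≤ b for all i, and Σ_{i=1}^m s_i ≤ c̄ }. Then there exists a global minimizer s* of Σ_{i=1}^m K(s_i) over D such that s*_i = s*_j for all indices i, j with s*_i ∈ [a, b] and s*_j ∈ [a, b]. -/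
open Finset

lemma sum_two_update {m : ℕ} (s : Fin m → ℝ) (i j : Fin m) (hij : i ≠ j) (μ : ℝ)
    (F : ℝ → ℝ) :
    ∑ k, F (Function.update (Function.update s i μ) j μ k) + F (s i) + F (s j)
      = ∑ k, F (s k) + F μ + F μ := by
  classical
  have hji : j ∈ (Finset.univ : Finset (Fin m)) := Finset.mem_univ _
  have hiu : i ∈ (Finset.univ : Finset (Fin m)) \ {j} := by
    simp [hij]
  have hcomp : (fun k => F (Function.update (Function.update s i μ) j μ k))
      = Function.update (Function.update (F ∘ s) i (F μ)) j (F μ) := by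
    show F ∘ (Function.update (Function.update s i μ) j μ) = _
    rw [Function.comp_update, Function.comp_update]
  have h1 : ∑ k, F (Function.update (Function.update s i μ) j μ k)
      = F μ + ∑ k ∈ Finset.univ \ {j}, Function.update (F ∘ s) i (F μ) k := by
    rw [hcomp]
    exact Finset.sum_update_of_mem hji _ _
  have h2 : ∑ k ∈ Finset.univ \ {j}, Function.update (F ∘ s) i (F μ) k
      = F μ + ∑ k ∈ (Finset.univ \ {j}) \ {i}, F (s k) :=
    Finset.sum_update_of_mem hiu _ _
  have hj' : (Finset.univ : Finset (Fin m)) \ {j} = Finset.univ.erase j :=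
    Finset.sdiff_singleton_eq_erase _ _
  have hi' : ((Finset.univ : Finset (Fin m)) \ {j}) \ {i} = (Finset.univ.erase j).erase i := by
    rw [hj', Finset.sdiff_singleton_eq_erase]
  have h3 : ∑ k, F (s k) = F (s j) + ∑ k ∈ Finset.univ.erase j, F (s k) :=
    (Finset.add_sum_erase _ _ hji).symm
  have h4 : ∑ k ∈ Finset.univ.erase j, F (s k)
      = F (s i) + ∑ k ∈ (Finset.univ.erase j).erase i, F (s k) :=
    (Finset.add_sum_erase _ _ (by simp [hij])).symm
  rw [h1, h2, hi', h3, h4]; ring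

/-- Claim 4: there is a global minimizer `s*` of `Σ_i K(s*_i)` over `D` whose
coordinates lying in `[a, b]` are all equal. -/
theorem exists_minimizer_convex_part_equal
    (m : ℕ) (hm : 1 ≤ m) (a b cbar : ℝ) (ha : 0 ≤ a) (hab : a ≤ b) (hcbar : 0 ≤ cbar)
    (K : ℝ → ℝ)
    (hKcont : ContinuousOn K (Set.Icc 0 b))
    (hKconv : ConvexOn ℝ (Set.Icc a b) K) :
    ∃ sstar ∈ {x : Fin m → ℝ | (∀ i, x i ∈ Set.Icc 0 b) ∧ ∑ i, x i ≤ cbar},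
      (∀ y ∈ {x : Fin m → ℝ | (∀ i, x i ∈ Set.Icc 0 b) ∧ ∑ i, x i ≤ cbar},
        ∑ i, K (sstar i) ≤ ∑ i, K (y i)) ∧
      (∀ i j, sstar i ∈ Set.Icc a b → sstar j ∈ Set.Icc a b → sstar i = sstar j) := by
  classical
  set D := {x : Fin m → ℝ | (∀ i, x i ∈ Set.Icc 0 b) ∧ ∑ i, x i ≤ cbar} with hDdef
  have hb : (0:ℝ) ≤ b := ha.trans hab
  have h0D : (0 : Fin m → ℝ) ∈ D := ⟨fun i => ⟨le_rfl, hb⟩, by simp [hcbar]⟩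
  -- D is closed
  have h1 : IsClosed {x : Fin m → ℝ | ∀ i, x i ∈ Set.Icc 0 b} := by
    have he : {x : Fin m → ℝ | ∀ i, x i ∈ Set.Icc 0 b}
        = ⋂ i, (fun x : Fin m → ℝ => x i) ⁻¹' Set.Icc 0 b := by
      ext x; simp
    rw [he]
    exact isClosed_iInter fun i => isClosed_Icc.preimage (continuous_apply i)
  have h2 : IsClosed {x : Fin m → ℝ | ∑ i, x i ≤ cbar} :=
    isClosed_le (by continuity) continuous_const
  have hDclosed : IsClosed D := by
    have : D = {x : Fin m → ℝ | ∀ i, x i ∈ Set.Icc 0 b} ∩ {x | ∑ i, x i ≤ cbar} := by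
      ext x; simp [hDdef, Set.mem_setOf_eq]
    rw [this]; exact h1.inter h2
  have hDsub : D ⊆ Set.Icc (0 : Fin m → ℝ) (fun _ => b) := by
    intro x hx
    exact ⟨fun i => (hx.1 i).1, fun i => (hx.1 i).2⟩
  have hDcompact : IsCompact D :=
    IsCompact.of_isClosed_subset isCompact_Icc hDclosed hDsub
  -- f continuous on D
  set f : (Fin m → ℝ) → ℝ := fun x => ∑ i, K (x i) with hfdef
  have hf : ContinuousOn f D := by
    apply continuousOn_finset_sum
    intro i _
    exact hKcont.comp (continuous_apply i).continuousOn (fun x hx => hx.1 i)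
  obtain ⟨z, hzD, hz⟩ := hDcompact.exists_isMinOn ⟨0, h0D⟩ hf
  -- set of minimizers
  set M : Set (Fin m → ℝ) := D ∩ f ⁻¹' Set.Iic (f z) with hMdef
  have hMclosed : IsClosed M := hf.preimage_isClosed_of_isClosed hDclosed isClosed_Iic
  have hMcompact : IsCompact M :=
    IsCompact.of_isClosed_subset hDcompact hMclosed Set.inter_subset_left
  have hzM : z ∈ M := ⟨hzD, by simp⟩
  set g : (Fin m → ℝ) → ℝ := fun x => ∑ i, (x i) ^ 2 with hgdef
  have hg : ContinuousOn g M := (by continuity : Continuous g).continuousOn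
  obtain ⟨s, hsM, hs⟩ := hMcompact.exists_isMinOn ⟨z, hzM⟩ hg
  have hsD : s ∈ D := hsM.1
  have hsf : f s = f z := le_antisymm hsM.2 (hz hsD)
  refine ⟨s, hsD, ?_, ?_⟩
  · intro y hy
    calc f s = f z := hsf
    _ ≤ f y := hz hy
  · intro i j hi hj
    by_contra hne
    have hij : i ≠ j := by rintro rfl; exact hne rfl
    set μ : ℝ := (s i + s j) / 2 with hμdef
    have hμab : μ ∈ Set.Icc a b := by
      constructor
      · rw [hμdef]; linarith [hi.1, hj.1]
      · rw [hμdef]; linarith [hi.2, hj.2]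
    set y : Fin m → ℝ := Function.update (Function.update s i μ) j μ with hydef
    have hyk : ∀ k, y k = μ ∨ y k = s k := by
      intro k
      by_cases hk : k = j
      · left; subst hk; rw [hydef, Function.update_self]
      · by_cases hk' : k = i
        · left; subst hk'; rw [hydef, Function.update_of_ne hk, Function.update_self]
        · right; rw [hydef, Function.update_of_ne hk, Function.update_of_ne hk']
    have hyD : y ∈ D := by
      constructor
      · intro k
        rcases hyk k with h | h
        · rw [h]; exact ⟨ha.trans hμab.1, hμab.2⟩
        · rw [h]; exact hsD.1 k
      · have := sum_two_update s i j hij μ id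
        simp only [id] at this
        have hsum : ∑ k, y k = ∑ k, s k := by rw [hydef]; linarith [this]
        rw [hsum]; exact hsD.2
    -- f y ≤ f s
    have hconv : K μ ≤ (K (s i) + K (s j)) / 2 := by
      have := hKconv.2 hi hj (by norm_num : (0:ℝ) ≤ 1/2) (by norm_num : (0:ℝ) ≤ 1/2)
        (by norm_num)
      simp only [smul_eq_mul] at this
      have hμeq : μ = (1/2 : ℝ) * s i + (1/2 : ℝ) * s j := by rw [hμdef]; ring
      rw [hμeq]; linarith [this]
    have hK := sum_two_update s i j hij μ K
    have hfy : f y ≤ f s := by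
      simp only [hfdef]
      have : ∑ k, K (y k) + K (s i) + K (s j) = ∑ k, K (s k) + K μ + K μ := by
        rw [hydef]; exact hK
      linarith [hconv, this]
    have hyM : y ∈ M := ⟨hyD, by simp only [Set.mem_preimage, Set.mem_Iic]; linarith [hsf, hfy]⟩
    -- g y < g s
    have hsq := sum_two_update s i j hij μ (fun x => x ^ 2)
    have hμlt : μ ^ 2 + μ ^ 2 < (s i) ^ 2 + (s j) ^ 2 := by
      have h0 : s i - s j ≠ 0 := sub_ne_zero.mpr hne
      have : (s i - s j) ^ 2 > 0 := by positivity
      rw [hμdef]; nlinarith [this]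
    have hgy : g y < g s := by
      simp only [hgdef]
      have : ∑ k, (y k) ^ 2 + (s i) ^ 2 + (s j) ^ 2 = ∑ k, (s k) ^ 2 + μ ^ 2 + μ ^ 2 := by
        rw [hydef]; exact hsq
      linarith [hμlt, this]
    exact absurd (hs hyM) (not_le.mpr hgy)
end

section
/- (Claim 5) Let m ≥ 1, 0 ≤ a ≤ b, c̄ ≥ 0, and let K : ℝ → ℝ be continuous on [0, b], concave on [0, a], and convex on [a, b]. Let D = { s ∈ ℝ^m : 0 ≤ s_i ≤ b for all i, and Σ_{i=1}^m s_i ≤ c̄ }. Then there exists a global minimizer s* of Σ_{i=1}^m K(s_i) over D such that the set {i : 0 < s*_i < a} has cardinality at most 1, and s*_i = s*_j for all indices i, j with s*_i ∈ [a, b] and s*_j ∈ [a, b]. -/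
lemma sum_update2 {m : ℕ} (x : Fin m → ℝ) {i j : Fin m} (hij : i ≠ j) (p q : ℝ) (g : ℝ → ℝ) :
    ∑ k, g (if k = i then p else if k = j then q else x k)
      = ∑ k, g (x k) + (g p - g (x i)) + (g q - g (x j)) := by
  have hji : j ≠ i := hij.symm
  have h : ∀ k, g (if k = i then p else if k = j then q else x k)
      = g (x k) + ((if k = i then g p - g (x i) else 0)
        + (if k = j then g q - g (x j) else 0)) := by
    intro k
    by_cases h1 : k = i
    · subst h1; simp [hij]
    · by_cases h2 : k = j
      · subst h2; simp [hji]
      · simp [h1, h2]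
  rw [Finset.sum_congr rfl fun k _ => h k, Finset.sum_add_distrib, Finset.sum_add_distrib]
  simp [Finset.sum_ite_eq']
  ring

lemma concave_spread {a : ℝ} {K : ℝ → ℝ} (hK : ConcaveOn ℝ (Set.Icc 0 a) K)
    {u v t : ℝ} (huv : u ≤ v) (ht : 0 < t)
    (h1 : u - t ∈ Set.Icc 0 a) (h2 : v + t ∈ Set.Icc 0 a) :
    K (u - t) + K (v + t) ≤ K u + K v := by
  set d := v - u + 2*t with hd
  have hd0 : 0 < d := by simp only [hd]; linarith
  have hl1 : (0:ℝ) ≤ (v - u + t)/d := by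
    apply div_nonneg (by linarith) hd0.le
  have hl2 : (0:ℝ) ≤ t/d := div_nonneg ht.le hd0.le
  have hsum : (v - u + t)/d + t/d = 1 := by field_simp; ring
  have hsum' : t/d + (v - u + t)/d = 1 := by linarith
  have c1 := hK.2 h1 h2 hl1 hl2 hsum
  have c2 := hK.2 h1 h2 hl2 hl1 hsum'
  rw [smul_eq_mul, smul_eq_mul, smul_eq_mul, smul_eq_mul] at c1 c2
  have e1 : (v - u + t)/d * (u - t) + t/d * (v + t) = u := by field_simp; ring
  have e2 : t/d * (u - t) + (v - u + t)/d * (v + t) = v := by field_simp; ring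
  rw [e1] at c1
  rw [e2] at c2
  calc K (u - t) + K (v + t)
      = ((v - u + t)/d + t/d) * (K (u - t) + K (v + t)) := by rw [hsum]; ring
    _ = ((v - u + t)/d * K (u - t) + t/d * K (v + t))
        + (t/d * K (u - t) + (v - u + t)/d * K (v + t)) := by ring
    _ ≤ K u + K v := by linarith

lemma convex_avg {a b : ℝ} {K : ℝ → ℝ} (hK : ConvexOn ℝ (Set.Icc a b) K)
    {u v : ℝ} (h1 : u ∈ Set.Icc a b) (h2 : v ∈ Set.Icc a b) :
    K ((u + v)/2) + K ((u + v)/2) ≤ K u + K v := by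
  have c := hK.2 h1 h2 (by norm_num : (0:ℝ) ≤ 1/2) (by norm_num : (0:ℝ) ≤ 1/2) (by norm_num)
  rw [smul_eq_mul, smul_eq_mul, smul_eq_mul, smul_eq_mul] at c
  have e : 1/2 * u + 1/2 * v = (u+v)/2 := by ring
  rw [e] at c
  linarith


/-- Claim 5: there is a global minimizer `s*` of `Σ_i K(s*_i)` over `D` with at
most one coordinate in the open interval `(0, a)`, and whose coordinates lying
in `[a, b]` are all equal. -/
theorem exists_minimizer_structured
    (m : ℕ) (hm : 1 ≤ m) (a b cbar : ℝ) (ha : 0 ≤ a) (hab : a ≤ b) (hcbar : 0 ≤ cbar)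
    (K : ℝ → ℝ)
    (hKcont : ContinuousOn K (Set.Icc 0 b))
    (hKconc : ConcaveOn ℝ (Set.Icc 0 a) K)
    (hKconv : ConvexOn ℝ (Set.Icc a b) K) :
    ∃ sstar ∈ {x : Fin m → ℝ | (∀ i, x i ∈ Set.Icc 0 b) ∧ ∑ i, x i ≤ cbar},
      (∀ y ∈ {x : Fin m → ℝ | (∀ i, x i ∈ Set.Icc 0 b) ∧ ∑ i, x i ≤ cbar},
        ∑ i, K (sstar i) ≤ ∑ i, K (y i)) ∧
      ({i : Fin m | 0 < sstar i ∧ sstar i < a}).ncard ≤ 1 ∧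
      (∀ i j, sstar i ∈ Set.Icc a b → sstar j ∈ Set.Icc a b → sstar i = sstar j) := by
  have hb0 : (0:ℝ) ≤ b := ha.trans hab
  set D : Set (Fin m → ℝ) := {x | (∀ i, x i ∈ Set.Icc 0 b) ∧ ∑ i, x i ≤ cbar} with hDdef
  set c : ℝ → ℝ := fun t => max 0 (min b t) with hcdef
  have hcmem : ∀ t, c t ∈ Set.Icc (0:ℝ) b := fun t =>
    ⟨le_max_left _ _, max_le hb0 (min_le_left _ _)⟩
  have hceq : ∀ t ∈ Set.Icc (0:ℝ) b, c t = t := by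
    intro t ht
    simp only [hcdef]
    rw [min_eq_right ht.2, max_eq_right ht.1]
  have hccont : Continuous c := continuous_const.max (continuous_const.min continuous_id)
  set L : ℝ → ℝ := fun t => K (c t) with hLdef
  have hLcont : Continuous L := hKcont.comp_continuous hccont hcmem
  have hLK : ∀ t ∈ Set.Icc (0:ℝ) b, L t = K t := fun t ht => by
    simp only [hLdef]; rw [hceq t ht]
  set F : (Fin m → ℝ) → ℝ := fun x => ∑ i, L (x i) with hFdef
  have hFcont : Continuous F := continuous_finset_sum _ fun i _ => hLcont.comp (continuous_apply i)
  set φ : ℝ → ℝ := fun t => (a - min t a)^2 with hphidef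
  have hphicont : Continuous φ :=
    ((continuous_const.sub (continuous_id.min continuous_const)).pow 2)
  set G1 : (Fin m → ℝ) → ℝ := fun x => ∑ i, φ (x i) with hG1def
  have hG1cont : Continuous G1 :=
    continuous_finset_sum _ fun i _ => hphicont.comp (continuous_apply i)
  set G2 : (Fin m → ℝ) → ℝ := fun x => ∑ i, (x i)^2 with hG2def
  have hG2cont : Continuous G2 := continuous_finset_sum _ fun i _ => ((continuous_apply i).pow 2)
  have hDeq : D = (Set.univ.pi fun _ : Fin m => Set.Icc (0:ℝ) b) ∩ {x | ∑ i, x i ≤ cbar} := by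
    ext x
    constructor
    · rintro ⟨h1, h2⟩; exact ⟨fun i _ => h1 i, h2⟩
    · rintro ⟨h1, h2⟩; exact ⟨fun i => h1 i (Set.mem_univ i), h2⟩
  have hDclosed : IsClosed D := by
    rw [hDeq]
    exact (isClosed_set_pi fun i _ => isClosed_Icc).inter
      (isClosed_le (continuous_finset_sum _ fun i _ => continuous_apply i) continuous_const)
  have hDcomp : IsCompact D := by
    have hpi : IsCompact (Set.univ.pi fun _ : Fin m => Set.Icc (0:ℝ) b) :=
      isCompact_univ_pi fun _ => isCompact_Icc
    refine IsCompact.of_isClosed_subset hpi hDclosed ?_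
    intro x hx i _; exact hx.1 i
  have hDne : D.Nonempty := ⟨fun _ => 0, fun i => ⟨le_refl _, hb0⟩, by simp [hcbar]⟩
  obtain ⟨x0, hx0D, hx0⟩ := hDcomp.exists_isMinOn hDne hFcont.continuousOn
  set M1 : Set (Fin m → ℝ) := {x | x ∈ D ∧ F x = F x0} with hM1def
  have hM1comp : IsCompact M1 := by
    have hq : M1 = D ∩ F ⁻¹' {F x0} := by
      ext x
      simp only [hM1def, Set.mem_setOf_eq, Set.mem_inter_iff, Set.mem_preimage,
        Set.mem_singleton_iff]
    rw [hq]
    exact hDcomp.inter_right (isClosed_singleton.preimage hFcont)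
  have hM1ne : M1.Nonempty := ⟨x0, hx0D, rfl⟩
  obtain ⟨x1, hx1, hx1max⟩ := hM1comp.exists_isMaxOn hM1ne hG1cont.continuousOn
  set M2 : Set (Fin m → ℝ) := {x | x ∈ M1 ∧ G1 x = G1 x1} with hM2def
  have hM2comp : IsCompact M2 := by
    have hq : M2 = M1 ∩ G1 ⁻¹' {G1 x1} := by
      ext x
      simp only [hM2def, Set.mem_setOf_eq, Set.mem_inter_iff, Set.mem_preimage,
        Set.mem_singleton_iff]
    rw [hq]
    exact hM1comp.inter_right (isClosed_singleton.preimage hG1cont)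
  have hM2ne : M2.Nonempty := ⟨x1, hx1, rfl⟩
  obtain ⟨z, hz2, hzmin⟩ := hM2comp.exists_isMinOn hM2ne hG2cont.continuousOn
  obtain ⟨⟨hzD, hzF⟩, hzG1⟩ := hz2
  have hFz : ∀ y ∈ D, F z ≤ F y := fun y hy => by rw [hzF]; exact hx0 hy
  -- generic perturbation facts
  have hpert : ∀ (i j : Fin m), i ≠ j → ∀ p q : ℝ, p ∈ Set.Icc 0 b → q ∈ Set.Icc 0 b →
      p + q = z i + z j →
      (fun k => if k = i then p else if k = j then q else z k) ∈ D := by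
    intro i j hij p q hp hq hpq
    constructor
    · intro k
      by_cases h1 : k = i
      · simpa [h1] using hp
      · by_cases h2 : k = j
        · simpa [h1, h2, hij.symm] using hq
        · simpa [h1, h2] using hzD.1 k
    · have := sum_update2 z hij p q (fun t => t)
      rw [this]
      have : ∑ k, z k ≤ cbar := hzD.2
      linarith
  refine ⟨z, hzD, ?_, ?_, ?_⟩
  · intro y hy
    have h1 : ∑ i, K (z i) = F z := Finset.sum_congr rfl fun i _ => (hLK _ (hzD.1 i)).symm
    have h2 : ∑ i, K (y i) = F y := Finset.sum_congr rfl fun i _ => (hLK _ (hy.1 i)).symm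
    rw [h1, h2]
    exact hFz y hy
  · -- at most one coordinate in (0,a)
    by_contra hcard
    push_neg at hcard
    obtain ⟨i, j, hiS, hjS, hij⟩ :=
      (Set.one_lt_ncard_iff (Set.toFinite _)).mp hcard
    simp only [Set.mem_setOf_eq] at hiS hjS
    have key : ∀ i j : Fin m, i ≠ j → 0 < z i → z i < a → 0 < z j → z j < a →
        z i ≤ z j → False := by
      intro i j hij hi1 hi2 hj1 hj2 hle
      set t : ℝ := min (z i) (a - z j) with htdef
      have ht : 0 < t := lt_min hi1 (by linarith)
      have hti : t ≤ z i := min_le_left _ _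
      have htj : t ≤ a - z j := min_le_right _ _
      have hp : z i - t ∈ Set.Icc (0:ℝ) a := ⟨by linarith, by linarith⟩
      have hq : z j + t ∈ Set.Icc (0:ℝ) a := ⟨by linarith, by linarith⟩
      set y : Fin m → ℝ := fun k => if k = i then z i - t else if k = j then z j + t else z k
        with hydef
      have hyD : y ∈ D :=
        hpert i j hij _ _ ⟨hp.1, hp.2.trans hab⟩ ⟨hq.1, hq.2.trans hab⟩ (by ring)
      have hziI : z i ∈ Set.Icc (0:ℝ) a := ⟨hi1.le, hi2.le⟩
      have hzjI : z j ∈ Set.Icc (0:ℝ) a := ⟨hj1.le, hj2.le⟩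
      have hKle : K (z i - t) + K (z j + t) ≤ K (z i) + K (z j) :=
        concave_spread hKconc hle ht hp hq
      have hsub : ∀ s : ℝ, s ∈ Set.Icc (0:ℝ) a → s ∈ Set.Icc (0:ℝ) b :=
        fun s hs => ⟨hs.1, hs.2.trans hab⟩
      have hFy : F y ≤ F z := by
        have hs := sum_update2 z hij (z i - t) (z j + t) L
        have : F y = F z + (L (z i - t) - L (z i)) + (L (z j + t) - L (z j)) := hs
        rw [this, hLK _ (hsub _ hp), hLK _ (hsub _ hq), hLK _ (hsub _ hziI),
          hLK _ (hsub _ hzjI)]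
        linarith
      have hyM1 : y ∈ M1 := ⟨hyD, le_antisymm (hFy.trans_eq hzF) (hx0 hyD)⟩
      have hphival : ∀ s : ℝ, s ∈ Set.Icc (0:ℝ) a → φ s = (a - s)^2 := by
        intro s hs
        simp only [hphidef]
        rw [min_eq_left hs.2]
      have hG1y : G1 y = G1 z + (φ (z i - t) - φ (z i)) + (φ (z j + t) - φ (z j)) :=
        sum_update2 z hij (z i - t) (z j + t) φ
      have hG1gt : G1 z < G1 y := by
        rw [hG1y, hphival _ hp, hphival _ hq, hphival _ hziI, hphival _ hzjI]
        nlinarith [ht, hle]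
      have := hx1max hyM1
      rw [← hzG1] at this
      exact absurd this (not_le.mpr hG1gt)
    rcases le_total (z i) (z j) with h | h
    · exact key i j hij hiS.1 hiS.2 hjS.1 hjS.2 h
    · exact key j i hij.symm hjS.1 hjS.2 hiS.1 hiS.2 h
  · -- coordinates in [a,b] are equal
    intro i j hi hj
    by_contra hne
    have hij : i ≠ j := fun h => hne (h ▸ rfl)
    set v : ℝ := (z i + z j)/2 with hvdef
    have hv : v ∈ Set.Icc a b := ⟨by simp only [hvdef]; cases hi; cases hj; linarith,
      by simp only [hvdef]; cases hi; cases hj; linarith⟩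
    have hsub : ∀ s : ℝ, s ∈ Set.Icc a b → s ∈ Set.Icc (0:ℝ) b :=
      fun s hs => ⟨ha.trans hs.1, hs.2⟩
    set y : Fin m → ℝ := fun k => if k = i then v else if k = j then v else z k with hydef
    have hyD : y ∈ D := hpert i j hij v v (hsub _ hv) (hsub _ hv)
      (by simp only [hvdef]; ring)
    have hKle : K v + K v ≤ K (z i) + K (z j) := convex_avg hKconv hi hj
    have hFy : F y ≤ F z := by
      have hs : F y = F z + (L v - L (z i)) + (L v - L (z j)) := sum_update2 z hij v v L
      rw [hs, hLK _ (hsub _ hv), hLK _ (hsub _ hi), hLK _ (hsub _ hj)]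
      linarith
    have hyM1 : y ∈ M1 := ⟨hyD, le_antisymm (hFy.trans_eq hzF) (hx0 hyD)⟩
    have hphi0 : ∀ s : ℝ, s ∈ Set.Icc a b → φ s = 0 := by
      intro s hs
      simp only [hphidef]
      rw [min_eq_right hs.1]
      ring
    have hG1y : G1 y = G1 x1 := by
      have hs : G1 y = G1 z + (φ v - φ (z i)) + (φ v - φ (z j)) := sum_update2 z hij v v φ
      rw [hs, hphi0 _ hv, hphi0 _ hi, hphi0 _ hj, ← hzG1]
      ring
    have hyM2 : y ∈ M2 := ⟨hyM1, hG1y⟩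
    have hG2y : G2 y = G2 z + (v^2 - (z i)^2) + (v^2 - (z j)^2) :=
      sum_update2 z hij v v (fun t => t^2)
    have hlt : G2 y < G2 z := by
      rw [hG2y]
      have hne0 : z i - z j ≠ 0 := sub_ne_zero.mpr hne
      have : (z i - z j)^2 > 0 := by positivity
      simp only [hvdef]
      nlinarith [this]
    exact absurd (hzmin hyM2) (not_le.mpr hlt)
end

section
/- (Theorem 3) Let m ≥ 1, 0 < a ≤ b, and 0 ≤ c̄ < m·a, and let K : ℝ → ℝ be continuous on [0, b], nonincreasing on [0, b], concave on [0, a], and convex on [a, b]. Let D = { s ∈ ℝ^m : 0 ≤ s_i ≤ b for all i, and Σ_{i=1}^m s_i ≤ c̄ }. Then the minimum of Σ_{i=1}^m K(s_i) over D equals the minimum, over integers n ∈ {0, 1, …, m−1} and reals β with max(0, c̄ − n·b) ≤ β ≤ min(a, c̄ − n·a), of K(β) + n·K((c̄ − β)/n) + (m − 1 − n)·K(0), where for n = 0 the middle term n·K((c̄ − β)/n) is interpreted as 0 (and the inner minimum over pairs (n, β) with an empty range of β is taken over the remaining feasible pairs, which are nonempty). -/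
open Set

lemma pair_concave {c d : ℝ} {K : ℝ → ℝ} (hK : ConcaveOn ℝ (Set.Icc c d) K)
    {u v x : ℝ} (hcu : c ≤ u) (hvd : v ≤ d) (hux : u ≤ x) (hxv : x ≤ v) :
    K u + K v ≤ K x + K (u + v - x) := by
  rcases eq_or_lt_of_le (hux.trans hxv) with h | huv
  · have hx : x = u := le_antisymm (h ▸ hxv) hux
    rw [hx]
    have h2 : u + v - u = v := by ring
    rw [h2]
  · set lam := (x - u) / (v - u) with hlam
    have hvu : 0 < v - u := by linarith
    have h0 : 0 ≤ lam := div_nonneg (by linarith) hvu.le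
    have h1 : lam ≤ 1 := by rw [hlam, div_le_one hvu]; linarith
    have humem : u ∈ Set.Icc c d := ⟨hcu, by linarith⟩
    have hvmem : v ∈ Set.Icc c d := ⟨by linarith, hvd⟩
    have e1 : (1 - lam) • u + lam • v = x := by
      simp only [smul_eq_mul, hlam]
      field_simp
      ring
    have e2 : lam • u + (1 - lam) • v = u + v - x := by
      simp only [smul_eq_mul, hlam]
      field_simp
      ring
    have i1 : (1 - lam) • K u + lam • K v ≤ K ((1 - lam) • u + lam • v) :=
      hK.2 humem hvmem (by linarith) h0 (by ring)
    have i2 : lam • K u + (1 - lam) • K v ≤ K (lam • u + (1 - lam) • v) :=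
      hK.2 humem hvmem h0 (by linarith) (by ring)
    rw [e1] at i1; rw [e2] at i2
    have hs := add_le_add i1 i2
    simp only [smul_eq_mul] at hs
    nlinarith [hs]

lemma concave_multiset {a : ℝ} {K : ℝ → ℝ} (hK : ConcaveOn ℝ (Set.Icc 0 a) K) :
    ∀ (p : ℕ) (t : Multiset ℝ), Multiset.card t = p + 1 →
      (∀ x ∈ t, 0 ≤ x ∧ x ≤ a) →
    ∃ (k : ℕ) (β : ℝ), k ≤ p ∧ 0 ≤ β ∧ β ≤ a ∧ β + k * a = t.sum ∧
      K β + k * K a + ((p : ℝ) - k) * K 0 ≤ (t.map K).sum := by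
  intro p
  induction p with
  | zero =>
    intro t hc hmem
    obtain ⟨x, rfl⟩ := Multiset.card_eq_one.mp hc
    obtain ⟨hx0, hxa⟩ := hmem x (Multiset.mem_singleton_self x)
    exact ⟨0, x, le_rfl, hx0, hxa, by simp, by simp⟩
  | succ p ih =>
    intro t hc hmem
    obtain ⟨x, hxm⟩ := Multiset.card_pos_iff_exists_mem.mp (show 0 < Multiset.card t by omega)
    obtain ⟨t1, rfl⟩ := Multiset.exists_cons_of_mem hxm
    obtain ⟨y, hym⟩ := Multiset.card_pos_iff_exists_mem.mp
      (show 0 < Multiset.card t1 by simp at hc; omega)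
    obtain ⟨t2, rfl⟩ := Multiset.exists_cons_of_mem hym
    obtain ⟨hx0, hxa⟩ := hmem x (Multiset.mem_cons_self _ _)
    obtain ⟨hy0, hya⟩ := hmem y (Multiset.mem_cons_of_mem (Multiset.mem_cons_self _ _))
    have hmem2 : ∀ z ∈ t2, 0 ≤ z ∧ z ≤ a := fun z hz =>
      hmem z (Multiset.mem_cons_of_mem (Multiset.mem_cons_of_mem hz))
    have hc2 : Multiset.card t2 = p := by simp at hc; omega
    by_cases hxy : x + y ≤ a
    · obtain ⟨k, β, hk, hβ0, hβa, hsum, hle⟩ := ih ((x + y) ::ₘ t2)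
        (by simp [hc2]) (by
          intro z hz
          rcases Multiset.mem_cons.mp hz with h | h
          · exact h ▸ ⟨by linarith, hxy⟩
          · exact hmem2 z h)
      have hpair : K 0 + K (x + y) ≤ K x + K y := by
        have := pair_concave hK (le_refl (0:ℝ)) hxy hx0 (by linarith)
        have h2 : 0 + (x + y) - x = y := by ring
        rwa [h2] at this
      refine ⟨k, β, by omega, hβ0, hβa, ?_, ?_⟩
      · simp only [Multiset.sum_cons] at hsum ⊢; linarith
      · simp only [Multiset.map_cons, Multiset.sum_cons] at hle ⊢
        push_cast
        linarith
    · push_neg at hxy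
      obtain ⟨k, β, hk, hβ0, hβa, hsum, hle⟩ := ih ((x + y - a) ::ₘ t2)
        (by simp [hc2]) (by
          intro z hz
          rcases Multiset.mem_cons.mp hz with h | h
          · exact h ▸ ⟨by linarith, by linarith⟩
          · exact hmem2 z h)
      have hpair : K (x + y - a) + K a ≤ K x + K y := by
        have := pair_concave hK (show (0:ℝ) ≤ x + y - a by linarith)
          (le_refl a) (show x + y - a ≤ x by linarith) hxa
        have h2 : x + y - a + a - x = y := by ring
        rwa [h2] at this
      refine ⟨k + 1, β, by omega, hβ0, hβa, ?_, ?_⟩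
      · simp only [Multiset.sum_cons] at hsum ⊢; push_cast; push_cast at hsum; linarith
      · simp only [Multiset.map_cons, Multiset.sum_cons] at hle ⊢
        push_cast
        linarith

set_option maxHeartbeats 1000000 in
lemma fill_lemma {m : ℕ} {a b cbar : ℝ} {K : ℝ → ℝ}
    (ha : 0 < a) (hab : a ≤ b) (hcbar0 : 0 ≤ cbar) (hcbarm : cbar < m * a)
    (hKanti : AntitoneOn K (Set.Icc 0 b))
    (hKconv : ConvexOn ℝ (Set.Icc a b) K)
    (v : ℝ)
    (hv : ∀ n : ℕ, n ≤ m - 1 → ∀ β : ℝ,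
      max 0 (cbar - n * b) ≤ β → β ≤ min a (cbar - n * a) →
      v ≤ K β + (n : ℝ) * K ((cbar - β) / n) + ((m : ℝ) - 1 - n) * K 0) :
    ∀ (d n : ℕ), n + d + 1 = m → ∀ β c : ℝ, 0 ≤ β → β ≤ a → a ≤ c → c ≤ b →
      β + n * c ≤ cbar →
      v ≤ K β + (n : ℝ) * K c + ((m : ℝ) - 1 - n) * K 0 := by
  have hb : 0 < b := lt_of_lt_of_le ha hab
  intro d
  induction d with
  | zero =>
    intro n hn β c hβ0 hβa hac hcb hsum
    have hna : (n : ℝ) * a ≤ (n : ℝ) * c := by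
      apply mul_le_mul_of_nonneg_left hac (Nat.cast_nonneg n)
    rcases Nat.eq_zero_or_pos n with hn0 | hnpos
    · -- n = 0, m = 1, so cbar < a ; β ≤ cbar
      subst hn0
      have hm1 : m = 1 := by omega
      have hca : cbar ≤ a := by
        rw [hm1] at hcbarm; push_cast at hcbarm; linarith
      have h := hv 0 (by omega) cbar (by simpa using hcbar0) (by simp [hca])
      have hKc : K cbar ≤ K β := hKanti ⟨hβ0, by linarith⟩
        ⟨hcbar0, by linarith⟩ (by push_cast at hsum; linarith)
      push_cast at h ⊢
      linarith
    · by_cases hB : cbar - β ≤ (n : ℝ) * b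
      · -- Case A : pair (n, β) is feasible
        have hnr : (0 : ℝ) < n := by exact_mod_cast hnpos
        have h := hv n (by omega) β (max_le hβ0 (by linarith))
          (le_min hβa (by linarith))
        have hcd : c ≤ (cbar - β) / n := by
          rw [le_div_iff₀ hnr]; linarith
        have hdb : (cbar - β) / n ≤ b := by
          rw [div_le_iff₀ hnr]; linarith
        have hKd : K ((cbar - β) / n) ≤ K c :=
          hKanti ⟨by linarith, hcb⟩ ⟨by linarith, hdb⟩ hcd
        have := mul_le_mul_of_nonneg_left hKd (le_of_lt hnr)
        linarith
      · push_neg at hB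
        by_cases hB1 : cbar - (n : ℝ) * b ≤ a
        · -- Case B1 : pair (n, cbar - n b) is feasible
          have hnr : (0 : ℝ) < n := by exact_mod_cast hnpos
          have h0β1 : (0 : ℝ) ≤ cbar - n * b := by nlinarith
          have h := hv n (by omega) (cbar - n * b)
            (max_le h0β1 le_rfl)
            (le_min hB1 (by nlinarith))
          have harg : (cbar - (cbar - n * b)) / n = b := by
            field_simp
            ring
          rw [harg] at h
          have hK1 : K (cbar - n * b) ≤ K β := hKanti ⟨hβ0, by linarith⟩
            ⟨h0β1, by linarith⟩ (by nlinarith)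
          have hK2 : K b ≤ K c := hKanti ⟨by linarith, hcb⟩ ⟨hb.le, le_rfl⟩ hcb
          have := mul_le_mul_of_nonneg_left hK2 (le_of_lt hnr)
          linarith
        · -- Case B2 impossible when d = 0 (n = m - 1)
          exfalso
          push_neg at hB1
          have hnm : (n : ℝ) + 1 = m := by exact_mod_cast hn
          nlinarith
  | succ d IH =>
    intro n hn β c hβ0 hβa hac hcb hsum
    have hna : (n : ℝ) * a ≤ (n : ℝ) * c := by
      apply mul_le_mul_of_nonneg_left hac (Nat.cast_nonneg n)
    rcases Nat.eq_zero_or_pos n with hn0 | hnpos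
    · subst hn0
      by_cases hca : cbar ≤ a
      · have h := hv 0 (by omega) cbar (by simpa using hcbar0) (by simp [hca])
        have hKc : K cbar ≤ K β := hKanti ⟨hβ0, by linarith⟩
          ⟨hcbar0, by linarith⟩ (by push_cast at hsum; linarith)
        push_cast at h ⊢
        linarith
      · push_neg at hca
        have h := IH 1 (by omega) 0 a le_rfl ha.le le_rfl hab (by push_cast; linarith)
        have hKa : K a ≤ K β := hKanti ⟨hβ0, by linarith⟩ ⟨ha.le, hab⟩ hβa
        push_cast at h ⊢
        linarith
    · by_cases hB : cbar - β ≤ (n : ℝ) * b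
      · have hnr : (0 : ℝ) < n := by exact_mod_cast hnpos
        have h := hv n (by omega) β (max_le hβ0 (by linarith))
          (le_min hβa (by linarith))
        have hcd : c ≤ (cbar - β) / n := by
          rw [le_div_iff₀ hnr]; linarith
        have hdb : (cbar - β) / n ≤ b := by
          rw [div_le_iff₀ hnr]; linarith
        have hKd : K ((cbar - β) / n) ≤ K c :=
          hKanti ⟨by linarith, hcb⟩ ⟨by linarith, hdb⟩ hcd
        have := mul_le_mul_of_nonneg_left hKd (le_of_lt hnr)
        linarith
      · push_neg at hB
        by_cases hB1 : cbar - (n : ℝ) * b ≤ a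
        · have hnr : (0 : ℝ) < n := by exact_mod_cast hnpos
          have h0β1 : (0 : ℝ) ≤ cbar - n * b := by nlinarith
          have h := hv n (by omega) (cbar - n * b)
            (max_le h0β1 le_rfl)
            (le_min hB1 (by nlinarith))
          have harg : (cbar - (cbar - n * b)) / n = b := by
            field_simp
            ring
          rw [harg] at h
          have hK1 : K (cbar - n * b) ≤ K β := hKanti ⟨hβ0, by linarith⟩
            ⟨h0β1, by linarith⟩ (by nlinarith)
          have hK2 : K b ≤ K c := hKanti ⟨by linarith, hcb⟩ ⟨hb.le, le_rfl⟩ hcb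
          have := mul_le_mul_of_nonneg_left hK2 (le_of_lt hnr)
          linarith
        · -- Case B2 : raise a zero coordinate, use IH with n+1
          push_neg at hB1
          have hnr : (0 : ℝ) < n := by exact_mod_cast hnpos
          obtain ⟨c2, hc2⟩ : ∃ c2 : ℝ, c2 = (a + (n : ℝ) * b) / ((n : ℝ) + 1) := ⟨_, rfl⟩
          have hn1 : (0 : ℝ) < (n : ℝ) + 1 := by linarith
          have hac2 : a ≤ c2 := by
            rw [hc2, le_div_iff₀ hn1]
            have := mul_le_mul_of_nonneg_left hab (Nat.cast_nonneg (α := ℝ) n)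
            linarith
          have hc2b : c2 ≤ b := by
            rw [hc2, div_le_iff₀ hn1]; linarith
          have hsum2 : (0 : ℝ) + ((n : ℕ) + 1 : ℕ) * c2 ≤ cbar := by
            push_cast
            rw [hc2]
            rw [zero_add, mul_div_cancel₀ _ (ne_of_gt hn1)]
            nlinarith
          have h := IH (n + 1) (by omega) 0 c2 le_rfl ha.le hac2 hc2b hsum2
          have hne : ((n : ℝ) + 1) ≠ 0 := hn1.ne'
          have hconv : ((n : ℝ) + 1) * K c2 ≤ K a + n * K b := by
            have hmem1 : a ∈ Set.Icc a b := ⟨le_rfl, hab⟩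
            have hmem2 : b ∈ Set.Icc a b := ⟨hab, le_rfl⟩
            have e : (1 / ((n : ℝ) + 1)) • a + ((n : ℝ) / (n + 1)) • b = c2 := by
              rw [hc2]; simp only [smul_eq_mul]; field_simp
            have hcx : K ((1 / ((n : ℝ) + 1)) • a + ((n : ℝ) / (n + 1)) • b) ≤
                (1 / ((n : ℝ) + 1)) • K a + ((n : ℝ) / (n + 1)) • K b :=
              hKconv.2 hmem1 hmem2 (by positivity) (by positivity)
                (by field_simp; ring)
            rw [e] at hcx
            simp only [smul_eq_mul] at hcx
            calc ((n : ℝ) + 1) * K c2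
                ≤ ((n : ℝ) + 1) * ((1 / ((n : ℝ) + 1)) * K a + ((n : ℝ) / (n + 1)) * K b) :=
                  mul_le_mul_of_nonneg_left hcx hn1.le
              _ = K a + n * K b := by
                  rw [mul_add, ← mul_assoc, ← mul_assoc, mul_one_div_cancel hne,
                    mul_div_assoc', mul_comm ((n:ℝ)+1) (n:ℝ), mul_div_assoc,
                    div_self hne, mul_one, one_mul]
          have hKa : K a ≤ K β := hKanti ⟨hβ0, by linarith⟩ ⟨ha.le, hab⟩ hβa
          have hKb : K b ≤ K c := hKanti ⟨by linarith, hcb⟩ ⟨hb.le, le_rfl⟩ hcb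
          push_cast at h ⊢
          linarith [mul_le_mul_of_nonneg_left hKb (le_of_lt hnr)]

lemma struct_sum (m n : ℕ) (hn : n < m) (x y z : ℝ) :
    ∑ i : Fin m, (if (i : ℕ) = 0 then x else if (i : ℕ) ≤ n then y else z)
      = x + n * y + ((m : ℝ) - 1 - n) * z := by
  rw [Fin.sum_univ_eq_sum_range (fun i => if i = 0 then x else if i ≤ n then y else z) m]
  rw [Finset.range_eq_Ico, ← Finset.sum_Ico_consecutive _ (by omega : 0 ≤ n + 1) (by omega : n + 1 ≤ m),
    ← Finset.sum_Ico_consecutive _ (by omega : 0 ≤ 1) (by omega : 1 ≤ n + 1)]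
  have h1 : ∑ i ∈ Finset.Ico 0 1, (if i = 0 then x else if i ≤ n then y else z) = x := by
    simp
  have h2 : ∑ i ∈ Finset.Ico 1 (n + 1), (if i = 0 then x else if i ≤ n then y else z)
      = n * y := by
    rw [Finset.sum_congr rfl (g := fun _ => y) (fun i hi => by
      simp only [Finset.mem_Ico] at hi
      rw [if_neg (by omega), if_pos (by omega)])]
    rw [Finset.sum_const, Nat.card_Ico]
    simp
  have h3 : ∑ i ∈ Finset.Ico (n + 1) m, (if i = 0 then x else if i ≤ n then y else z)
      = ((m : ℝ) - 1 - n) * z := by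
    rw [Finset.sum_congr rfl (g := fun _ => z) (fun i hi => by
      simp only [Finset.mem_Ico] at hi
      rw [if_neg (by omega), if_neg (by omega)])]
    rw [Finset.sum_const, Nat.card_Ico]
    have : ((m - (n + 1) : ℕ) : ℝ) = (m : ℝ) - 1 - n := by
      push_cast [Nat.cast_sub (by omega : n + 1 ≤ m)]; ring
    rw [nsmul_eq_mul, this]
  rw [h1, h2, h3]

lemma S2_least (m : ℕ) (hm : 1 ≤ m) (a b cbar : ℝ)
    (ha : 0 < a) (hab : a ≤ b) (hcbar0 : 0 ≤ cbar) (hcbarm : cbar < m * a)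
    (K : ℝ → ℝ) (hKcont : ContinuousOn K (Set.Icc 0 b)) :
    ∃ v : ℝ, IsLeast {w : ℝ | ∃ n : ℕ, n ≤ m - 1 ∧ ∃ β : ℝ,
        max 0 (cbar - n * b) ≤ β ∧ β ≤ min a (cbar - n * a) ∧
        w = K β + (n : ℝ) * K ((cbar - β) / n) + ((m : ℝ) - 1 - n) * K 0} v := by
  have hb : 0 < b := lt_of_lt_of_le ha hab
  set g : ℕ → ℝ → ℝ := fun n β => K β + (n : ℝ) * K ((cbar - β) / n) + ((m : ℝ) - 1 - n) * K 0
    with hg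
  set S2 : Set ℝ := {w : ℝ | ∃ n : ℕ, n ≤ m - 1 ∧ ∃ β : ℝ,
        max 0 (cbar - n * b) ≤ β ∧ β ≤ min a (cbar - n * a) ∧ w = g n β} with hS2
  have Seq : S2 = ⋃ i : Fin m, g (i : ℕ) ''
      Set.Icc (max 0 (cbar - (i : ℕ) * b)) (min a (cbar - (i : ℕ) * a)) := by
    ext w
    simp only [hS2, Set.mem_setOf_eq, Set.mem_iUnion, Set.mem_image, Set.mem_Icc]
    constructor
    · rintro ⟨n, hn, β, h1, h2, rfl⟩
      exact ⟨⟨n, by omega⟩, β, ⟨h1, h2⟩, rfl⟩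
    · rintro ⟨i, β, ⟨h1, h2⟩, rfl⟩
      exact ⟨(i : ℕ), by omega, β, h1, h2, rfl⟩
  have hsub : ∀ n : ℕ, Set.Icc (max 0 (cbar - (n : ℝ) * b)) (min a (cbar - (n : ℝ) * a))
      ⊆ Set.Icc 0 b := by
    intro n β hβ
    simp only [Set.mem_Icc, le_max_iff, min_le_iff] at hβ ⊢
    have h1 : (0:ℝ) ≤ β := le_trans (le_max_left _ _) hβ.1
    have h2 : β ≤ a := le_trans hβ.2 (min_le_left _ _)
    exact ⟨h1, le_trans h2 hab⟩
  have hmaps : ∀ n : ℕ, Set.MapsTo (fun β => (cbar - β) / (n : ℝ))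
      (Set.Icc (max 0 (cbar - (n : ℝ) * b)) (min a (cbar - (n : ℝ) * a))) (Set.Icc 0 b) := by
    intro n β hβ
    rcases Nat.eq_zero_or_pos n with rfl | hn
    · simp only [Nat.cast_zero, div_zero]
      exact ⟨le_rfl, hb.le⟩
    · have hnr : (0 : ℝ) < n := by exact_mod_cast hn
      have h1 : cbar - (n : ℝ) * b ≤ β := le_trans (le_max_right _ _) hβ.1
      have h2 : β ≤ cbar - (n : ℝ) * a := le_trans hβ.2 (min_le_right _ _)
      constructor
      · apply div_nonneg _ hnr.le
        nlinarith
      · rw [div_le_iff₀ hnr]; linarith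
  have hcompact : ∀ i : Fin m, IsCompact (g (i : ℕ) ''
      Set.Icc (max 0 (cbar - (i : ℕ) * b)) (min a (cbar - (i : ℕ) * a))) := by
    intro i
    apply IsCompact.image_of_continuousOn isCompact_Icc
    apply ContinuousOn.add
    apply ContinuousOn.add
    · exact hKcont.mono (hsub i)
    · exact continuousOn_const.mul ((hKcont.comp
        ((continuousOn_const.sub continuousOn_id).div_const _) (hmaps i)))
    · exact continuousOn_const
  have hcpt : IsCompact S2 := by
    rw [Seq]
    exact isCompact_iUnion hcompact
  have hne : S2.Nonempty := by
    set n0 : ℕ := ⌊cbar / a⌋₊ with hn0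
    have hda : 0 ≤ cbar / a := div_nonneg hcbar0 ha.le
    have hlt : cbar / a < m := by rw [div_lt_iff₀ ha]; linarith
    have hn0m : n0 < m := by
      rw [hn0]
      exact Nat.floor_lt hda |>.mpr hlt
    have hfl : (n0 : ℝ) * a ≤ cbar := by
      have := Nat.floor_le hda
      rw [← hn0] at this
      calc (n0 : ℝ) * a ≤ (cbar / a) * a := by
            apply mul_le_mul_of_nonneg_right this ha.le
        _ = cbar := by field_simp
    have hup : cbar < ((n0 : ℝ) + 1) * a := by
      have := Nat.lt_floor_add_one (cbar / a)
      rw [← hn0] at this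
      calc cbar = (cbar / a) * a := by field_simp
        _ < ((n0 : ℝ) + 1) * a := by
            apply mul_lt_mul_of_pos_right this ha
    refine ⟨g n0 (cbar - n0 * a), ?_⟩
    rw [hS2]
    refine ⟨n0, by omega, cbar - n0 * a, ?_, ?_, rfl⟩
    · apply max_le (by linarith)
      have : (n0 : ℝ) * a ≤ (n0 : ℝ) * b :=
        mul_le_mul_of_nonneg_left hab (Nat.cast_nonneg n0)
      linarith
    · exact le_min (by linarith) le_rfl
  exact hcpt.exists_isLeast hne
set_option maxHeartbeats 1000000 in
lemma lower_bound {m : ℕ} (hm : 1 ≤ m) {a b cbar : ℝ} {K : ℝ → ℝ}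
    (ha : 0 < a) (hab : a ≤ b) (hcbar0 : 0 ≤ cbar) (hcbarm : cbar < m * a)
    (hKanti : AntitoneOn K (Set.Icc 0 b))
    (hKconc : ConcaveOn ℝ (Set.Icc 0 a) K)
    (hKconv : ConvexOn ℝ (Set.Icc a b) K)
    (v : ℝ)
    (hv : ∀ n : ℕ, n ≤ m - 1 → ∀ β : ℝ,
      max 0 (cbar - n * b) ≤ β → β ≤ min a (cbar - n * a) →
      v ≤ K β + (n : ℝ) * K ((cbar - β) / n) + ((m : ℝ) - 1 - n) * K 0)
    (s : Fin m → ℝ) (hs : ∀ i, 0 ≤ s i ∧ s i ≤ b) (hssum : ∑ i, s i ≤ cbar) :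
    v ≤ ∑ i, K (s i) := by
  have hfill := fill_lemma ha hab hcbar0 hcbarm hKanti hKconv v hv
  classical
  set A : Finset (Fin m) := Finset.univ.filter (fun i => s i < a) with hA
  set B : Finset (Fin m) := Finset.univ.filter (fun i => ¬ s i < a) with hB
  have hsplitK : ∑ i ∈ A, K (s i) + ∑ i ∈ B, K (s i) = ∑ i, K (s i) :=
    Finset.sum_filter_add_sum_filter_not _ _ _
  have hsplits : ∑ i ∈ A, s i + ∑ i ∈ B, s i = ∑ i, s i :=
    Finset.sum_filter_add_sum_filter_not _ _ _
  have hcards : A.card + B.card = m := by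
    rw [hA, hB, Finset.card_filter_add_card_filter_not]
    simp
  have hmemB : ∀ i ∈ B, a ≤ s i ∧ s i ≤ b := by
    intro i hi
    rw [hB, Finset.mem_filter] at hi
    exact ⟨not_lt.mp hi.2, (hs i).2⟩
  have hmemA : ∀ i ∈ A, 0 ≤ s i ∧ s i ≤ a := by
    intro i hi
    rw [hA, Finset.mem_filter] at hi
    exact ⟨(hs i).1, hi.2.le⟩
  have hAne : A.Nonempty := by
    by_contra hAe
    rw [Finset.not_nonempty_iff_eq_empty] at hAe
    have hBall : B = Finset.univ := by
      rw [hB]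
      rw [Finset.filter_true_of_mem]
      intro i _
      intro hlt
      have : i ∈ A := by rw [hA, Finset.mem_filter]; exact ⟨Finset.mem_univ i, hlt⟩
      simp [hAe] at this
    have h1 : (m : ℝ) * a ≤ ∑ i, s i := by
      have := Finset.card_nsmul_le_sum Finset.univ s a
        (fun i _ => (hmemB i (hBall ▸ Finset.mem_univ i)).1)
      simpa [nsmul_eq_mul, Finset.card_univ] using this
    linarith
  have hp1 : 1 ≤ A.card := Finset.card_pos.mpr hAne
  -- concave step on A
  obtain ⟨k, β, hk, hβ0, hβa, hβsum, hβle⟩ := concave_multiset hKconc (A.card - 1)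
    (A.val.map s)
    (by rw [Multiset.card_map, ← Finset.card_def]; omega)
    (by
      intro x hx
      obtain ⟨i, hi, rfl⟩ := Multiset.mem_map.mp hx
      exact hmemA i hi)
  have hsumA : (A.val.map s).sum = ∑ i ∈ A, s i := (Finset.sum_eq_multiset_sum A s).symm
  have hsumAK : ((A.val.map s).map K).sum = ∑ i ∈ A, K (s i) := by
    rw [Multiset.map_map]
    exact (Finset.sum_eq_multiset_sum A (K ∘ s)).symm
  rw [hsumA] at hβsum
  rw [hsumAK] at hβle
  by_cases hq : B.card = 0
  · -- B empty
    have hBe : B = ∅ := Finset.card_eq_zero.mp hq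
    have hpm : A.card = m := by omega
    have hsum0 : β + (k : ℝ) * a ≤ cbar := by
      rw [hβsum]
      rw [hBe] at hsplits
      simp at hsplits
      linarith
    have hkm : k + (m - 1 - k) + 1 = m := by omega
    have h := hfill (m - 1 - k) k (by omega) β a hβ0 hβa le_rfl hab hsum0
    have hcast : ((A.card - 1 : ℕ) : ℝ) - k = (m : ℝ) - 1 - k := by
      have : A.card - 1 = m - 1 := by omega
      rw [this]
      push_cast [Nat.cast_sub hm]
      ring
    rw [hcast] at hβle
    rw [hBe] at hsplitK
    simp at hsplitK
    linarith
  · have hq1 : 1 ≤ B.card := by omega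
    have hqr : (0 : ℝ) < B.card := by exact_mod_cast hq1
    set SB := ∑ i ∈ B, s i with hSB
    set cB := SB / B.card with hcB
    have hcBa : a ≤ cB := by
      rw [hcB, le_div_iff₀ hqr]
      have := Finset.card_nsmul_le_sum B s a (fun i hi => (hmemB i hi).1)
      rw [nsmul_eq_mul] at this
      linarith
    have hcBb : cB ≤ b := by
      rw [hcB, div_le_iff₀ hqr]
      have := Finset.sum_le_card_nsmul B s b (fun i hi => (hmemB i hi).2)
      rw [nsmul_eq_mul] at this
      linarith
    -- Jensen on B
    have hjensen : (B.card : ℝ) * K cB ≤ ∑ i ∈ B, K (s i) := by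
      have h := hKconv.map_sum_le (t := B) (w := fun _ => ((B.card : ℝ))⁻¹)
        (p := s) (fun i _ => by positivity)
        (by
          rw [Finset.sum_const, nsmul_eq_mul]
          exact mul_inv_cancel₀ hqr.ne')
        (fun i hi => ⟨(hmemB i hi).1, (hmemB i hi).2⟩)
      simp only [smul_eq_mul] at h
      have harg : ∑ i ∈ B, ((B.card : ℝ))⁻¹ * s i = cB := by
        rw [← Finset.mul_sum, hcB, ← hSB]
        field_simp
      rw [harg] at h
      have h2 : ∑ i ∈ B, ((B.card : ℝ))⁻¹ * K (s i)
          = ((B.card : ℝ))⁻¹ * ∑ i ∈ B, K (s i) := by rw [← Finset.mul_sum]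
      rw [h2] at h
      calc (B.card : ℝ) * K cB ≤ (B.card : ℝ) * (((B.card : ℝ))⁻¹ * ∑ i ∈ B, K (s i)) :=
            mul_le_mul_of_nonneg_left h hqr.le
        _ = ∑ i ∈ B, K (s i) := by field_simp
    set n := k + B.card with hn
    have hnr : (0 : ℝ) < (n : ℝ) := by
      rw [hn]; push_cast; linarith [Nat.cast_nonneg (α := ℝ) k]
    obtain ⟨cs, hcs⟩ : ∃ cs : ℝ, cs = ((k : ℝ) * a + (B.card : ℝ) * cB) / (n : ℝ) := ⟨_, rfl⟩
    have hkn : (k : ℝ) + (B.card : ℝ) = (n : ℝ) := by rw [hn]; push_cast; ring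
    have hcsa : a ≤ cs := by
      rw [hcs, le_div_iff₀ hnr]
      nlinarith [Nat.cast_nonneg (α := ℝ) k, Nat.cast_nonneg (α := ℝ) B.card]
    have hcsb : cs ≤ b := by
      rw [hcs, div_le_iff₀ hnr]
      nlinarith [Nat.cast_nonneg (α := ℝ) k, Nat.cast_nonneg (α := ℝ) B.card]
    -- two-point convexity
    have hconv : (n : ℝ) * K cs ≤ (k : ℝ) * K a + (B.card : ℝ) * K cB := by
      have e : ((k : ℝ) / n) • a + ((B.card : ℝ) / n) • cB = cs := by
        rw [hcs]
        simp only [smul_eq_mul]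
        field_simp
      have hcx : K (((k : ℝ) / n) • a + ((B.card : ℝ) / n) • cB) ≤
          ((k : ℝ) / n) • K a + ((B.card : ℝ) / n) • K cB :=
        hKconv.2 ⟨le_rfl, hab⟩ ⟨hcBa, hcBb⟩ (by positivity) (by positivity)
          (by field_simp; exact hkn)
      rw [e] at hcx
      simp only [smul_eq_mul] at hcx
      calc (n : ℝ) * K cs ≤ (n : ℝ) * ((k : ℝ) / n * K a + (B.card : ℝ) / n * K cB) :=
            mul_le_mul_of_nonneg_left hcx hnr.le
        _ = (k : ℝ) * K a + (B.card : ℝ) * K cB := by field_simp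
    have hsumn : β + (n : ℝ) * cs ≤ cbar := by
      have hqcB : (B.card : ℝ) * cB = SB := by rw [hcB]; field_simp
      have : (n : ℝ) * cs = (k : ℝ) * a + SB := by
        rw [hcs, mul_div_cancel₀ _ hnr.ne', hqcB]
      rw [this]
      linarith
    have hnm : n ≤ m - 1 := by omega
    have h := hfill (m - 1 - n) n (by omega) β cs hβ0 hβa hcsa hcsb hsumn
    have hcast : ((A.card - 1 : ℕ) : ℝ) - k = (m : ℝ) - 1 - n := by
      have h1 : ((A.card - 1 : ℕ) : ℝ) = (A.card : ℝ) - 1 :=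
        by push_cast [Nat.cast_sub hp1]; ring
      have h2 : (m : ℝ) = (A.card : ℝ) + (B.card : ℝ) := by exact_mod_cast hcards.symm
      rw [h1, h2, hn]
      push_cast
      ring
    rw [hcast] at hβle
    linarith

/-- Theorem 3: the minimum of `Σ_i K(s_i)` over
`D = { s : 0 ≤ s_i ≤ b, set_option maxHeartbeats 1000000 in
Σ s_i ≤ c̄ }` equals the minimum over integers
`0 ≤ n ≤ m − 1` and reals `β` with `max 0 (c̄ − n b) ≤ β ≤ min a (c̄ − n a)` of
`K(β) + n K((c̄ − β)/n) + (m − 1 − n) K(0)`; for `n = 0` the middle term is `0`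
(in Lean, `(0 : ℝ) * K ((c̄ − β)/0) = 0`), and both minima are attained. -/
theorem symmetric_min_characterization
    (m : ℕ) (hm : 1 ≤ m) (a b cbar : ℝ)
    (ha : 0 < a) (hab : a ≤ b) (hcbar0 : 0 ≤ cbar) (hcbarm : cbar < m * a)
    (K : ℝ → ℝ)
    (hKcont : ContinuousOn K (Set.Icc 0 b))
    (hKanti : AntitoneOn K (Set.Icc 0 b))
    (hKconc : ConcaveOn ℝ (Set.Icc 0 a) K)
    (hKconv : ConvexOn ℝ (Set.Icc a b) K) :
    ∃ v : ℝ,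
      IsLeast ((fun s : Fin m → ℝ => ∑ i, K (s i)) ''
        {s : Fin m → ℝ | (∀ i, 0 ≤ s i ∧ s i ≤ b) ∧ ∑ i, s i ≤ cbar}) v ∧
      IsLeast {w : ℝ | ∃ n : ℕ, n ≤ m - 1 ∧ ∃ β : ℝ,
        max 0 (cbar - n * b) ≤ β ∧ β ≤ min a (cbar - n * a) ∧
        w = K β + (n : ℝ) * K ((cbar - β) / n) + ((m : ℝ) - 1 - n) * K 0} v := by
  obtain ⟨v, hvmem, hvlb⟩ := S2_least m hm a b cbar ha hab hcbar0 hcbarm K hKcont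
  have hv : ∀ n : ℕ, n ≤ m - 1 → ∀ β : ℝ,
      max 0 (cbar - n * b) ≤ β → β ≤ min a (cbar - n * a) →
      v ≤ K β + (n : ℝ) * K ((cbar - β) / n) + ((m : ℝ) - 1 - n) * K 0 :=
    fun n hn β h1 h2 => hvlb ⟨n, hn, β, h1, h2, rfl⟩
  refine ⟨v, ⟨?_, ?_⟩, hvmem, hvlb⟩
  · -- v is attained by a structured allocation
    obtain ⟨n, hn, β, h1, h2, hveq⟩ := hvmem
    have hβ0 : 0 ≤ β := le_trans (le_max_left _ _) h1
    have hβa : β ≤ a := le_trans h2 (min_le_left _ _)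
    set y : ℝ := (cbar - β) / n with hy
    set s : Fin m → ℝ := fun i =>
      if (i : ℕ) = 0 then β else if (i : ℕ) ≤ n then y else 0 with hsdef
    have hyab : 1 ≤ n → a ≤ y ∧ y ≤ b := by
      intro hn1
      have hnr : (0 : ℝ) < n := by exact_mod_cast hn1
      have hu : β ≤ cbar - n * a := le_trans h2 (min_le_right _ _)
      have hl : cbar - n * b ≤ β := le_trans (le_max_right _ _) h1
      constructor
      · rw [hy, le_div_iff₀ hnr]; linarith
      · rw [hy, div_le_iff₀ hnr]; linarith
    have hsum : ∑ i, s i = β + n * y + ((m : ℝ) - 1 - n) * 0 :=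
      struct_sum m n (by omega) β y 0
    refine ⟨s, ⟨?_, ?_⟩, ?_⟩
    · intro i
      rw [hsdef]
      simp only
      split_ifs with hi1 hi2
      · exact ⟨hβ0, le_trans hβa hab⟩
      · have hn1 : 1 ≤ n := by omega
        obtain ⟨hya, hyb⟩ := hyab hn1
        exact ⟨le_trans ha.le hya, hyb⟩
      · exact ⟨le_rfl, le_trans ha.le hab⟩
    · rw [hsum]
      rcases Nat.eq_zero_or_pos n with rfl | hn1
      · simp only [Nat.cast_zero, zero_mul]
        have : β ≤ cbar := le_trans h2 (by simp)
        linarith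
      · have hnr : (0 : ℝ) < n := by exact_mod_cast hn1
        rw [hy, mul_div_cancel₀ _ hnr.ne']
        linarith
    · have : ∑ i, K (s i) = K β + n * K y + ((m : ℝ) - 1 - n) * K 0 := by
        have hKsum : ∀ i : Fin m, K (s i) =
            (if (i : ℕ) = 0 then K β else if (i : ℕ) ≤ n then K y else K 0) := by
          intro i
          rw [hsdef]
          simp only
          split_ifs <;> rfl
        rw [Finset.sum_congr rfl (fun i _ => hKsum i)]
        exact struct_sum m n (by omega) (K β) (K y) (K 0)
      show (fun s : Fin m → ℝ => ∑ i, K (s i)) s = v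
      simp only
      rw [this]
      exact hveq.symm
  · -- v is a lower bound for the image set
    rintro w ⟨s, ⟨hs1, hs2⟩, rfl⟩
    exact lower_bound hm ha hab hcbar0 hcbarm hKanti hKconc hKconv v hv s hs1 hs2
end

section
/- (Finite buffer lower bound) Fix a buffer capacity B > 0. For nonnegative sequences S(t) and F(t) with long-term averages s and f respectively, initial buffer level 0 ≤ Q(1) ≤ B, buffer dynamics Q(t+1) = min(max(Q(t) + S(t) − F(t), 0), B), and shortfall κ(t) = max(F(t) − (Q(t) + S(t)), 0), the average shortfall satisfies liminf_{T→∞} (1/T) Σ_{t=1}^T κ(t) ≥ max(f − s, 0). -/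
open Filter

/-- Finite buffer lower bound: with buffer capacity `B`, the average shortfall
satisfies `liminf_{T→∞} (1/T) Σ_{t=1}^T κ(t) ≥ max (f − s) 0`. -/
theorem finite_buffer_shortfall_lower_bound
    (B : ℝ) (hB : 0 < B)
    (S F Q κ : ℕ → ℝ) (s f : ℝ)
    (hS0 : ∀ t, 0 ≤ S t) (hF0 : ∀ t, 0 ≤ F t)
    (hQ1 : 0 ≤ Q 1) (hQ1B : Q 1 ≤ B)
    (hQrec : ∀ t, 1 ≤ t → Q (t + 1) = min (max (Q t + S t - F t) 0) B)
    (hκ : ∀ t, 1 ≤ t → κ t = max (F t - (Q t + S t)) 0)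
    (hs : Tendsto (fun T : ℕ => (∑ t ∈ Finset.Icc 1 T, S t) / T) atTop (nhds s))
    (hf : Tendsto (fun T : ℕ => (∑ t ∈ Finset.Icc 1 T, F t) / T) atTop (nhds f)) :
    max (f - s) 0 ≤
      Filter.liminf (fun T : ℕ => (∑ t ∈ Finset.Icc 1 T, κ t) / T) atTop := by
  -- κ nonneg
  have hκ0 : ∀ t, 1 ≤ t → 0 ≤ κ t := fun t ht => (hκ t ht).ge.trans' (le_max_right _ _)
  -- key telescoping bound
  have key : ∀ T : ℕ, Q (T + 1) - Q 1 + (∑ t ∈ Finset.Icc 1 T, F t)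
      - (∑ t ∈ Finset.Icc 1 T, S t) ≤ ∑ t ∈ Finset.Icc 1 T, κ t := by
    intro T
    induction T with
    | zero => simp
    | succ n ih =>
      have h1 : (1:ℕ) ≤ n + 1 := Nat.le_add_left 1 n
      rw [Finset.sum_Icc_succ_top h1, Finset.sum_Icc_succ_top h1, Finset.sum_Icc_succ_top h1]
      have hstep : Q (n + 1 + 1) - Q (n + 1) - S (n + 1) + F (n + 1) ≤ κ (n + 1) := by
        rw [hκ _ h1, hQrec _ h1]
        have := min_le_left (max (Q (n+1) + S (n+1) - F (n+1)) 0) B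
        have h2 := le_max_left (F (n+1) - (Q (n+1) + S (n+1))) 0
        have : max (Q (n+1) + S (n+1) - F (n+1)) 0
            = Q (n+1) + S (n+1) - F (n+1) + max (F (n+1) - (Q (n+1) + S (n+1))) 0 := by
          rcases le_total (Q (n+1) + S (n+1) - F (n+1)) 0 with h | h
          · rw [max_eq_right h, max_eq_left (by linarith)]; ring
          · rw [max_eq_left h, max_eq_right (by linarith)]; ring
        nlinarith [min_le_left (max (Q (n+1) + S (n+1) - F (n+1)) 0) B]
      linarith
  have hQpos : ∀ T : ℕ, 0 ≤ Q (T + 1) := by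
    intro T
    cases T with
    | zero => exact hQ1
    | succ n =>
      rw [hQrec _ (Nat.le_add_left 1 n)]
      exact le_min (le_max_right _ _) hB.le
  -- eventual lower bound on averages
  have hev : ∀ᶠ T : ℕ in atTop,
      (∑ t ∈ Finset.Icc 1 T, F t) / T - (∑ t ∈ Finset.Icc 1 T, S t) / T - B / T
        ≤ (∑ t ∈ Finset.Icc 1 T, κ t) / T := by
    filter_upwards [eventually_ge_atTop 1] with T hT
    have hTpos : (0:ℝ) < T := by exact_mod_cast hT
    rw [div_sub_div_same, div_sub_div_same, div_le_div_iff_of_pos_right hTpos]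
    have := key T
    have := hQpos T
    linarith
  have htend : Tendsto (fun T : ℕ =>
      (∑ t ∈ Finset.Icc 1 T, F t) / T - (∑ t ∈ Finset.Icc 1 T, S t) / T - B / T)
      atTop (nhds (f - s - 0)) :=
    (hf.sub hs).sub (tendsto_const_nhds.div_atTop tendsto_natCast_atTop_atTop)
  rw [sub_zero] at htend
  have hbdd : IsBoundedUnder (· ≥ ·) atTop
      (fun T : ℕ => (∑ t ∈ Finset.Icc 1 T, κ t) / T) :=
    htend.isBoundedUnder_ge.mono_ge hev
  have hQall : ∀ t : ℕ, 1 ≤ t → 0 ≤ Q t := by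
    intro t ht
    obtain ⟨n, rfl⟩ := Nat.exists_eq_add_of_le ht
    exact hQpos n |>.trans_eq (by ring_nf)
  have hκleF : ∀ t : ℕ, 1 ≤ t → κ t ≤ F t := by
    intro t ht
    rw [hκ t ht]
    refine max_le (by nlinarith [hQall t ht, hS0 t]) (hF0 t)
  have hcob : IsCoboundedUnder (· ≥ ·) atTop
      (fun T : ℕ => (∑ t ∈ Finset.Icc 1 T, κ t) / T) := by
    apply isCoboundedUnder_ge_of_eventually_le atTop (x := f + 1)
    filter_upwards [eventually_ge_atTop 1, hf.eventually (eventually_le_nhds (lt_add_one f))]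
      with T hT hFle
    refine le_trans ?_ hFle
    gcongr with t ht
    exact hκleF t (Finset.mem_Icc.1 ht).1
  have h1 : f - s ≤ liminf (fun T : ℕ => (∑ t ∈ Finset.Icc 1 T, κ t) / T) atTop := by
    calc f - s = liminf (fun T : ℕ =>
        (∑ t ∈ Finset.Icc 1 T, F t) / T - (∑ t ∈ Finset.Icc 1 T, S t) / T - B / T) atTop :=
        htend.liminf_eq.symm
      _ ≤ _ := liminf_le_liminf hev htend.isBoundedUnder_ge hcob
  have h0 : (0:ℝ) ≤ liminf (fun T : ℕ => (∑ t ∈ Finset.Icc 1 T, κ t) / T) atTop := by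
    apply le_liminf_of_le hcob
    filter_upwards [eventually_ge_atTop 1] with T hT
    exact div_nonneg (Finset.sum_nonneg fun t ht => hκ0 t (Finset.mem_Icc.1 ht).1)
      (Nat.cast_nonneg T)
  exact max_le h1 h0
end
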